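/- arXiv:cs/0603058 — 10 statements merged into one kernel-verified Lean document; each statement's English description precedes it below -/
import Mathlib

section
/- A parameterized decomposition with quadratic parameters γ ∈ ℝ^{|Ē|} is a convex decomposition if and only if for every directed edge {i,j}: γᵢⱼ > 0, Γᵢⱼ²γᵢⱼγⱼᵢ ≥ 1, and 1 − Σ_{i∈N(j)} Γᵢⱼ²γᵢⱼ > 0 for every vertex j. -/
/-!
Each term is a quadratic plus a linear function, so it is convex iff its quadratic form is
positive semidefinite, and the gap in the convexity inequality is `s t / 2 · Q(p - q)`.
For the one-variable term this means a positive leading coefficient. For the pairwise term,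
with Hessian `[[γⱼᵢΓᵢⱼ², Γᵢⱼ], [Γᵢⱼ, γᵢⱼΓᵢⱼ²]]`, the determinant condition divided by
`Γᵢⱼ² > 0` is `Γᵢⱼ²γᵢⱼγⱼᵢ ≥ 1`, and together with `γᵢⱼ > 0` it forces `γⱼᵢ > 0`.
-/

open Classical Finset Matrix Filter

noncomputable section

/-- `i` and `j` are adjacent: there is an edge `(i,j) ∈ E` (recall `Γᵢⱼ ≠ 0` iff `(i,j) ∈ E`). -/
def Adj {n : ℕ} (Γ : Matrix (Fin n) (Fin n) ℝ) (i j : Fin n) : Prop :=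
  i ≠ j ∧ Γ i j ≠ 0

/-- The neighbors `N(j)` of a vertex `j`. -/
def nbrs {n : ℕ} (Γ : Matrix (Fin n) (Fin n) ℝ) (j : Fin n) : Finset (Fin n) :=
  Finset.univ.filter (fun i => Adj Γ i j)

/-- `Σ_{u ∈ N(i)\{j}} Γ_{ui}² γ_{ui}`. -/
def Ssum {n : ℕ} (Γ : Matrix (Fin n) (Fin n) ℝ) (γ : Fin n → Fin n → ℝ)
    (i j : Fin n) : ℝ :=
  ∑ u ∈ Finset.univ.filter (fun u => Adj Γ u i ∧ u ≠ j), (Γ u i) ^ 2 * γ u i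

/-- The min-sum quadratic parameter operator `F_{ij}(γ) = 1/(1 − Σ_{u∈N(i)\{j}} Γ_{ui}² γ_{ui})`. -/
def Fop {n : ℕ} (Γ : Matrix (Fin n) (Fin n) ℝ) (γ : Fin n → Fin n → ℝ) :
    Fin n → Fin n → ℝ :=
  fun i j => 1 / (1 - Ssum Γ γ i j)

/-- The domain `D` of the operator `F`. -/
def DomD {n : ℕ} (Γ : Matrix (Fin n) (Fin n) ℝ) : Set (Fin n → Fin n → ℝ) :=
  {γ | ∀ i j, Adj Γ i j → Ssum Γ γ i j < 1}

/-- `v` is the quadratic-parameter vector of a convex decomposition: `v > 0` on edges,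
`Γᵢⱼ²vᵢⱼvⱼᵢ ≥ 1` on edges, and `Σ_{i∈N(j)} Γᵢⱼ²vᵢⱼ < 1` at every vertex. -/
def ConvVec {n : ℕ} (Γ : Matrix (Fin n) (Fin n) ℝ) (v : Fin n → Fin n → ℝ) : Prop :=
  (∀ i j, Adj Γ i j → 0 < v i j) ∧
  (∀ i j, Adj Γ i j → 1 ≤ (Γ i j) ^ 2 * v i j * v j i) ∧
  (∀ j, ∑ i ∈ nbrs Γ j, (Γ i j) ^ 2 * v i j < 1)

lemma convexOn_univ_quadratic_iff (a b c d e : ℝ) :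
    ConvexOn ℝ Set.univ (fun p : ℝ × ℝ =>
      (1 / 2) * (a * p.1 ^ 2 + 2 * b * p.1 * p.2 + c * p.2 ^ 2) - d * p.1 - e * p.2) ↔
    ∀ x y : ℝ, 0 ≤ a * x ^ 2 + 2 * b * x * y + c * y ^ 2 := by
  constructor
  · intro hf x y
    -- midpoint convexity between `(x, y)` and `(-x, -y)`: the linear part cancels
    have hmid := hf.2 (Set.mem_univ (x, y)) (Set.mem_univ (-x, -y))
      (by norm_num : (0 : ℝ) ≤ 1 / 2) (by norm_num : (0 : ℝ) ≤ 1 / 2) (by norm_num)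
    simp only [Prod.smul_mk, Prod.mk_add_mk, smul_eq_mul] at hmid
    nlinarith [hmid]
  · intro hQ
    refine ⟨convex_univ, fun p _ q _ s t hs ht hst => ?_⟩
    simp only [Prod.smul_fst, Prod.smul_snd, Prod.fst_add, Prod.snd_add, smul_eq_mul]
    obtain rfl : t = 1 - s := by linarith
    nlinarith [mul_nonneg (mul_nonneg hs ht) (hQ (p.1 - q.1) (p.2 - q.2))]

lemma quadratic_form_nonneg_iff (a b c : ℝ) :
    (∀ x y : ℝ, 0 ≤ a * x ^ 2 + 2 * b * x * y + c * y ^ 2) ↔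
    0 ≤ a ∧ 0 ≤ c ∧ b ^ 2 ≤ a * c := by
  constructor
  · intro hQ
    have hdisc : discrim a (2 * b) c ≤ 0 :=
      discrim_le_zero fun x => by simpa [sq, mul_assoc] using hQ x 1
    refine ⟨by simpa using hQ 1 0, by simpa using hQ 0 1, ?_⟩
    rw [discrim] at hdisc
    linarith
  · rintro ⟨ha, hc, hb⟩ x y
    rcases ha.eq_or_lt with rfl | ha
    · obtain rfl : b = 0 := by nlinarith
      simpa using mul_nonneg hc (sq_nonneg y)
    · -- `a · Q(x, y) = (a x + b y)² + (a c - b²) y²`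
      nlinarith [sq_nonneg (a * x + b * y), mul_nonneg (sub_nonneg.2 hb) (sq_nonneg y)]

lemma strictConvexOn_univ_quadratic_iff (c d : ℝ) :
    StrictConvexOn ℝ Set.univ (fun x : ℝ => (1 / 2) * c * x ^ 2 - d * x) ↔ 0 < c := by
  constructor
  · intro hf
    have hmid := hf.2 (Set.mem_univ (1 : ℝ)) (Set.mem_univ (-1 : ℝ)) (by norm_num)
      (by norm_num : (0 : ℝ) < 1 / 2) (by norm_num : (0 : ℝ) < 1 / 2) (by norm_num)
    simp only [smul_eq_mul] at hmid
    nlinarith [hmid]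
  · intro hc
    refine ⟨convex_univ, fun x _ y _ hxy s t hs ht hst => ?_⟩
    simp only [smul_eq_mul]
    have hsq : 0 < (x - y) ^ 2 := by positivity [sub_ne_zero.2 hxy]
    obtain rfl : t = 1 - s := by linarith
    nlinarith [mul_pos (mul_pos hs ht) (mul_pos hc hsq)]

lemma edge_psd_iff {g p q : ℝ} (hg : g ≠ 0) :
    (0 ≤ q * g ^ 2 ∧ 0 ≤ p * g ^ 2 ∧ g ^ 2 ≤ q * g ^ 2 * (p * g ^ 2)) ↔
    0 < p ∧ 1 ≤ g ^ 2 * p * q := by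
  have hg2 : 0 < g ^ 2 := by positivity
  have hdet : g ^ 2 ≤ q * g ^ 2 * (p * g ^ 2) ↔ 1 ≤ g ^ 2 * p * q := by
    rw [show q * g ^ 2 * (p * g ^ 2) = g ^ 2 * (g ^ 2 * p * q) by ring]
    exact le_mul_iff_one_le_right hg2
  rw [hdet]
  constructor
  · rintro ⟨-, hp, hpq⟩
    refine ⟨(nonneg_of_mul_nonneg_left hp hg2).lt_of_ne ?_, hpq⟩
    rintro rfl
    norm_num at hpq
  · rintro ⟨hp, hpq⟩
    have hq : 0 < q := pos_of_mul_pos_right (a := g ^ 2 * p) (by linarith) (by positivity)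
    exact ⟨by positivity, by positivity, hpq⟩

theorem stmt2_general {n : ℕ} (Γ : Matrix (Fin n) (Fin n) ℝ)
    (γ z : Fin n → Fin n → ℝ) (h : Fin n → ℝ) :
    ((∀ i j, Adj Γ i j →
        ConvexOn ℝ Set.univ (fun p : ℝ × ℝ =>
          (1 / 2) * (γ j i * (Γ i j) ^ 2 * p.1 ^ 2 + 2 * Γ i j * p.1 * p.2
              + γ i j * (Γ i j) ^ 2 * p.2 ^ 2)
            - z j i * p.1 - z i j * p.2)) ∧
      (∀ j, StrictConvexOn ℝ Set.univ (fun x : ℝ =>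
          (1 / 2) * (1 - ∑ i ∈ nbrs Γ j, (Γ i j) ^ 2 * γ i j) * x ^ 2
            - (h j - ∑ i ∈ nbrs Γ j, z i j) * x)))
    ↔
    ((∀ i j, Adj Γ i j → 0 < γ i j ∧ 1 ≤ (Γ i j) ^ 2 * γ i j * γ j i) ∧
      (∀ j, 0 < 1 - ∑ i ∈ nbrs Γ j, (Γ i j) ^ 2 * γ i j)) := by
  refine and_congr (forall₂_congr fun i j => forall_congr' fun hij => ?_)
    (forall_congr' fun j => strictConvexOn_univ_quadratic_iff _ _)
  rw [convexOn_univ_quadratic_iff, quadratic_form_nonneg_iff]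
  exact edge_psd_iff hij.2

/-- The parameterized decomposition with quadratic parameters `γ` (and arbitrary linear
parameters `z`) is a convex decomposition (each pairwise term convex, each single-vertex
term strictly convex) iff `γᵢⱼ > 0` and `Γᵢⱼ²γᵢⱼγⱼᵢ ≥ 1` on every directed edge, and
`1 − Σ_{i∈N(j)} Γᵢⱼ²γᵢⱼ > 0` at every vertex. -/
theorem stmt2 {n : ℕ} (Γ : Matrix (Fin n) (Fin n) ℝ) (hsym : Γ.IsSymm)
    (hdiag : ∀ i, Γ i i = 1)
    (γ z : Fin n → Fin n → ℝ) (h : Fin n → ℝ) :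
    ((∀ i j, Adj Γ i j →
        ConvexOn ℝ Set.univ (fun p : ℝ × ℝ =>
          (1 / 2) * (γ j i * (Γ i j) ^ 2 * p.1 ^ 2 + 2 * Γ i j * p.1 * p.2
              + γ i j * (Γ i j) ^ 2 * p.2 ^ 2)
            - z j i * p.1 - z i j * p.2)) ∧
      (∀ j, StrictConvexOn ℝ Set.univ (fun x : ℝ =>
          (1 / 2) * (1 - ∑ i ∈ nbrs Γ j, (Γ i j) ^ 2 * γ i j) * x ^ 2
            - (h j - ∑ i ∈ nbrs Γ j, z i j) * x)))
    ↔
    ((∀ i j, Adj Γ i j → 0 < γ i j ∧ 1 ≤ (Γ i j) ^ 2 * γ i j * γ j i) ∧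
      (∀ j, 0 < 1 - ∑ i ∈ nbrs Γ j, (Γ i j) ^ 2 * γ i j)) :=
  stmt2_general Γ γ z h
end
end

section
/- If v is the quadratic-parameter vector of a convex decomposition (i.e., v > 0 componentwise, Γᵢⱼ²vᵢⱼvⱼᵢ ≥ 1 for all edges, and Σ_{i∈N(j)}Γᵢⱼ²vᵢⱼ < 1 for all j), then for any γ ≤ v and any α > 1, α·F(γ) < (α−1)v + F(v − α(v − γ)) componentwise. -/
open Classical Finset Matrix Filter

noncomputable section

/-- Dominated-convexity inequality: if `v` comes from a convex decomposition, `γ ≤ v`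
and `α > 1` (with both arguments in the domain `D`), then
`α F(γ) < (α−1)v + F(v − α(v − γ))` componentwise. -/
theorem stmt4 {n : ℕ} (Γ : Matrix (Fin n) (Fin n) ℝ) (hsym : Γ.IsSymm)
    (hdiag : ∀ i, Γ i i = 1)
    (v γ : Fin n → Fin n → ℝ) (hv : ConvVec Γ v)
    (hle : ∀ i j, Adj Γ i j → γ i j ≤ v i j)
    (α : ℝ) (hα : 1 < α)
    (hγD : γ ∈ DomD Γ)
    (hD : (fun i j => v i j - α * (v i j - γ i j)) ∈ DomD Γ) :
    ∀ i j, Adj Γ i j →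
      α * Fop Γ γ i j <
        (α - 1) * v i j + Fop Γ (fun i j => v i j - α * (v i j - γ i j)) i j := by
  intro i j hij
  obtain ⟨hpos, hvv, hsum⟩ := hv
  have hΓ : Γ j i = Γ i j := hsym.apply i j
  have hji : Adj Γ j i := ⟨hij.1.symm, by rw [hΓ]; exact hij.2⟩
  set s := Ssum Γ γ i j with hs_def
  set w := Ssum Γ v i j with hw_def
  set t := Ssum Γ (fun i j => v i j - α * (v i j - γ i j)) i j with ht_def
  have ht_eq : t = (1 - α) * w + α * s := by
    simp only [ht_def, hw_def, hs_def, Ssum, Finset.mul_sum, ← Finset.sum_add_distrib]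
    exact Finset.sum_congr rfl fun u _ => by ring
  have hs1 : s < 1 := hγD i j hij
  have ht1 : t < 1 := hD i j hij
  -- bound on w
  have hset : nbrs Γ i = insert j (Finset.univ.filter (fun u => Adj Γ u i ∧ u ≠ j)) := by
    ext u
    by_cases h' : u = j <;> simp [nbrs, h', hji]
  have hnotmem : j ∉ Finset.univ.filter (fun u => Adj Γ u i ∧ u ≠ j) := by simp
  have hkey : Γ i j ^ 2 * v j i + w < 1 := by
    have := hsum i
    rw [hset, Finset.sum_insert hnotmem, hΓ] at this
    exact this
  have hv_ij : 0 < v i j := hpos i j hij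
  have hvji : 1 / v i j ≤ Γ i j ^ 2 * v j i := by
    rw [div_le_iff₀ hv_ij]
    nlinarith [hvv i j hij]
  have hΓpos : 0 < Γ i j ^ 2 * v j i := lt_of_lt_of_le (by positivity) hvji
  have hw1 : w < 1 := by linarith
  have hwv : 1 / (1 - w) < v i j := by
    rw [div_lt_iff₀ (by linarith)]
    have h1 : 1 / v i j < 1 - w := lt_of_le_of_lt hvji (by linarith)
    calc (1:ℝ) = v i j * (1 / v i j) := by field_simp
    _ < v i j * (1 - w) := mul_lt_mul_of_pos_left h1 hv_ij
  have hα0 : 0 < α := by linarith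
  -- convexity of x ↦ 1/x on positives
  have hconvex : ∀ a b lam : ℝ, 0 < a → 0 < b → 0 ≤ lam → lam ≤ 1 →
      1 / (lam * a + (1 - lam) * b) ≤ lam * (1 / a) + (1 - lam) * (1 / b) := by
    intro a b lam ha hb hl0 hl1
    have hd : 0 < lam * a + (1 - lam) * b := by
      rcases eq_or_lt_of_le hl0 with h | h
      · nlinarith
      · nlinarith [mul_pos h ha, mul_nonneg (by linarith : (0:ℝ) ≤ 1 - lam) hb.le]
    rw [div_le_iff₀ hd]
    have hrhs : lam * (1 / a) + (1 - lam) * (1 / b) = (lam * b + (1 - lam) * a) / (a * b) := by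
      field_simp
    rw [hrhs, div_mul_eq_mul_div, le_div_iff₀ (by positivity)]
    nlinarith [mul_nonneg (mul_nonneg hl0 (by linarith : (0:ℝ) ≤ 1 - lam)) (sq_nonneg (a - b))]
  have h1s : 1 - s = (1 / α) * (1 - t) + (1 - 1 / α) * (1 - w) := by
    rw [ht_eq]; field_simp; ring
  have hconv : 1 / (1 - s) ≤ (1 / α) * (1 / (1 - t)) + (1 - 1 / α) * (1 / (1 - w)) := by
    rw [h1s]
    exact hconvex (1 - t) (1 - w) (1 / α) (by linarith) (by linarith) (by positivity)
      (by rw [div_le_one hα0]; linarith)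
  have h2 : α * (1 / (1 - s)) ≤ 1 / (1 - t) + (α - 1) * (1 / (1 - w)) := by
    have hmul := mul_le_mul_of_nonneg_left hconv (le_of_lt hα0)
    have heq : ∀ A B : ℝ, α * ((1 / α) * A + (1 - 1 / α) * B) = A + (α - 1) * B := by
      intro A B; field_simp
    linarith [heq (1 / (1 - t)) (1 / (1 - w)) ▸ hmul]
  have h3 : (α - 1) * (1 / (1 - w)) < (α - 1) * v i j :=
    mul_lt_mul_of_pos_left hwv (by linarith)
  have hF1 : Fop Γ γ i j = 1 / (1 - s) := rfl
  have hF2 : Fop Γ (fun i j => v i j - α * (v i j - γ i j)) i j = 1 / (1 - t) := rfl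
  rw [hF1, hF2]
  linarith
end
end

section
/- If v is the quadratic-parameter vector of a convex decomposition, then F(v) < v componentwise. -/
open Classical Finset Matrix Filter

noncomputable section

/-- If `v` is the quadratic-parameter vector of a convex decomposition,
then `F(v) < v` componentwise. -/
theorem stmt5 {n : ℕ} (Γ : Matrix (Fin n) (Fin n) ℝ) (hsym : Γ.IsSymm)
    (hdiag : ∀ i, Γ i i = 1)
    (v : Fin n → Fin n → ℝ) (hv : ConvVec Γ v) :
    ∀ i j, Adj Γ i j → Fop Γ v i j < v i j := by
  obtain ⟨hpos, hge, hsum⟩ := hv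
  intro i j hij
  have hΓ : Γ j i = Γ i j := hsym.apply i j
  have hji : Adj Γ j i := ⟨hij.1.symm, by rw [hΓ]; exact hij.2⟩
  have hmem : j ∈ nbrs Γ i := by simp [nbrs, hji]
  have hsplit : ∑ u ∈ nbrs Γ i, Γ u i ^ 2 * v u i
      = Γ j i ^ 2 * v j i + Ssum Γ v i j := by
    rw [Ssum, ← Finset.add_sum_erase _ _ hmem]
    congr 1
    apply Finset.sum_congr _ (fun _ _ => rfl)
    ext u
    simp [nbrs, Finset.mem_erase, and_comm]
  have hS : Γ j i ^ 2 * v j i + Ssum Γ v i j < 1 := hsplit ▸ hsum i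
  have hpos' : 0 < Γ j i ^ 2 * v j i := by
    apply mul_pos (pow_two_pos_of_ne_zero hji.2) (hpos j i hji)
  have h1S : Γ j i ^ 2 * v j i < 1 - Ssum Γ v i j := by linarith
  have h0 : 0 < 1 - Ssum Γ v i j := lt_trans hpos' h1S
  have key : 1 / (1 - Ssum Γ v i j) < 1 / (Γ j i ^ 2 * v j i) :=
    one_div_lt_one_div_of_lt hpos' h1S
  have h2 : 1 / (Γ j i ^ 2 * v j i) ≤ v i j := by
    rw [div_le_iff₀ hpos']
    have := hge i j hij
    rw [hΓ]
    nlinarith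
  calc Fop Γ v i j = 1 / (1 - Ssum Γ v i j) := rfl
    _ < 1 / (Γ j i ^ 2 * v j i) := key
    _ ≤ v i j := h2
end
end

section
/- Let v_{ij} > 0, V_i > 0, S_{ij} ≥ 0 with Γᵢⱼ²v_{ij}v_{ji} ≥ 1, and α > 1. Then (α−1)v_{ij}(V_i + Γᵢⱼ²v_{ji} + αS_{ij})(V_i + Γᵢⱼ²v_{ji} + S_{ij}) + (V_i + Γᵢⱼ²v_{ji} + S_{ij}) − α(V_i + Γᵢⱼ²v_{ji} + αS_{ij}) > 0. -/
/-- The key algebraic inequality Δ > 0 from the proof of the monotone domination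
property of the min-sum quadratic update. -/
theorem stmt6 (Γij vij vji Vi Sij α : ℝ) (hΓ : Γij ≠ 0)
    (hvij : 0 < vij) (hvji : 0 < vji) (h1 : 1 ≤ Γij ^ 2 * vij * vji)
    (hVi : 0 < Vi) (hS : 0 ≤ Sij) (hα : 1 < α) :
    0 < (α - 1) * vij * (Vi + Γij ^ 2 * vji + α * Sij) * (Vi + Γij ^ 2 * vji + Sij)
        + (Vi + Γij ^ 2 * vji + Sij) - α * (Vi + Γij ^ 2 * vji + α * Sij) := by
  have hg : 0 < Γij ^ 2 := by positivity
  have hApos : 0 < Vi + Γij ^ 2 * vji + α * Sij := by positivity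
  have hαS : 0 ≤ α * Sij := by positivity
  have hvA : 1 ≤ vij * (Vi + Γij ^ 2 * vji + α * Sij) := by nlinarith [mul_pos hvij hVi, mul_nonneg hvij.le hαS]
  have hvB : 1 < vij * (Vi + Γij ^ 2 * vji + Sij) := by nlinarith [mul_pos hvij hVi, mul_nonneg hvij.le hS]
  have key : Sij < (Vi + Γij ^ 2 * vji + α * Sij) * (vij * (Vi + Γij ^ 2 * vji + Sij) - 1) := by
    nlinarith [mul_pos hApos (mul_pos hvij hVi), mul_nonneg hS (sub_nonneg.mpr hvA)]
  nlinarith [mul_pos (sub_pos.mpr hα) (sub_pos.mpr key)]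
end

section
/- If F: D → ℝⁿ is continuous, monotone, positive, and satisfies the domination property α·F(γ) < (α−1)v + F(v − α(v−γ)) for all α > 1 and γ ≤ v whenever the arguments lie in D, and there exists v ∈ D with F(v) < v and F(0) ≥ 0, then F has a unique fixed point γ* with 0 < γ* < v, and the iterates F^t(γ⁰) converge to γ* for every initial γ⁰ with 0 ≤ F(γ⁰) and γ⁰ ≤ v. -/
open Filter

/-- Abstract fixed-point theorem: if `F : D → ℝⁿ` is continuous, monotone, positive,
satisfies the domination property `αF(γ) < (α−1)v + F(v − α(v−γ))`, `D` is open and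
down-closed (contains `[0,v]` for `v ∈ D`, `v > 0`), and there is `v ∈ D` with
`F(v) < v` and `F(0) ≥ 0`, then `F` has a unique fixed point `γ*` with `0 < γ* < v`,
and `F^t(γ⁰) → γ*` whenever `0 ≤ F(γ⁰)` and `γ⁰ ≤ v`. -/
theorem stmt7 {n : ℕ} (D : Set (Fin n → ℝ)) (F : (Fin n → ℝ) → (Fin n → ℝ))
    (hopen : IsOpen D)
    (hdown : ∀ v ∈ D, (∀ i, 0 < v i) → ∀ x : Fin n → ℝ, 0 ≤ x → x ≤ v → x ∈ D)
    (hcont : ContinuousOn F D)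
    (hmono : ∀ γ γ', γ ∈ D → γ' ∈ D → γ ≤ γ' → F γ ≤ F γ')
    (hpos : ∀ γ ∈ D, ∀ i, 0 < F γ i)
    (v : Fin n → ℝ) (hvD : v ∈ D) (hvpos : ∀ i, 0 < v i)
    (hdom : ∀ α : ℝ, 1 < α → ∀ γ, γ ∈ D → γ ≤ v →
      (fun i => v i - α * (v i - γ i)) ∈ D →
      ∀ i, α * F γ i < (α - 1) * v i + F (fun i => v i - α * (v i - γ i)) i)
    (hFv : ∀ i, F v i < v i) (hF0 : 0 ≤ F 0) :
    ∃ γs : Fin n → ℝ, γs ∈ D ∧ Function.IsFixedPt F γs ∧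
      (∀ i, 0 < γs i ∧ γs i < v i) ∧
      (∀ γ', γ' ∈ D → Function.IsFixedPt F γ' →
        (∀ i, 0 < γ' i ∧ γ' i < v i) → γ' = γs) ∧
      (∀ γ0, γ0 ∈ D → 0 ≤ F γ0 → γ0 ≤ v →
        Tendsto (fun t => F^[t] γ0) atTop (nhds γs)) := by
  have hSD : ∀ x : Fin n → ℝ, 0 ≤ x → x ≤ v → x ∈ D :=
    fun x h1 h2 => hdown v hvD hvpos x h1 h2
  have hFv' : F v ≤ v := fun i => (hFv i).le
  have h0v : (0 : Fin n → ℝ) ≤ v := fun i => (hvpos i).le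
  have h0D : (0 : Fin n → ℝ) ∈ D := hSD 0 le_rfl h0v
  have hmap : ∀ x : Fin n → ℝ, x ∈ D → x ≤ v → 0 ≤ F x ∧ F x ≤ v := by
    intro x hx hxv
    exact ⟨fun i => (hpos x hx i).le, le_trans (hmono x v hx hvD hxv) hFv'⟩
  set u : ℕ → (Fin n → ℝ) := fun t => F^[t] v with hu
  set l : ℕ → (Fin n → ℝ) := fun t => F^[t] 0 with hl
  have hu_succ : ∀ t, u (t + 1) = F (u t) := fun t => Function.iterate_succ_apply' F t v
  have hl_succ : ∀ t, l (t + 1) = F (l t) := fun t => Function.iterate_succ_apply' F t 0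
  have hu_mem : ∀ t, 0 ≤ u t ∧ u t ≤ v ∧ u t ∈ D := by
    intro t; induction t with
    | zero => exact ⟨h0v, le_rfl, hvD⟩
    | succ t ih =>
      obtain ⟨h1, h2, h3⟩ := ih
      rw [hu_succ]
      obtain ⟨h4, h5⟩ := hmap (u t) h3 h2
      exact ⟨h4, h5, hSD _ h4 h5⟩
  have hl_mem : ∀ t, 0 ≤ l t ∧ l t ≤ v ∧ l t ∈ D := by
    intro t; induction t with
    | zero => exact ⟨le_rfl, h0v, h0D⟩
    | succ t ih =>
      obtain ⟨h1, h2, h3⟩ := ih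
      rw [hl_succ]
      obtain ⟨h4, h5⟩ := hmap (l t) h3 h2
      exact ⟨h4, h5, hSD _ h4 h5⟩
  have hu_anti1 : ∀ t, u (t + 1) ≤ u t := by
    intro t; induction t with
    | zero => simpa [hu] using hFv'
    | succ t ih =>
      calc u (t + 1 + 1) = F (u (t + 1)) := hu_succ (t + 1)
        _ ≤ F (u t) := hmono _ _ (hu_mem (t + 1)).2.2 (hu_mem t).2.2 ih
        _ = u (t + 1) := (hu_succ t).symm
  have hl_mono1 : ∀ t, l t ≤ l (t + 1) := by
    intro t; induction t with
    | zero => simpa [hl] using hF0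
    | succ t ih =>
      calc l (t + 1) = F (l t) := hl_succ t
        _ ≤ F (l (t + 1)) := hmono _ _ (hl_mem t).2.2 (hl_mem (t + 1)).2.2 ih
        _ = l (t + 1 + 1) := (hl_succ (t + 1)).symm
  have hu_anti : Antitone u := antitone_nat_of_succ_le hu_anti1
  have hl_mon : Monotone l := monotone_nat_of_le_succ hl_mono1
  have hlu : ∀ t, l t ≤ u t := by
    intro t; induction t with
    | zero => exact h0v
    | succ t ih =>
      rw [hl_succ, hu_succ]
      exact hmono _ _ (hl_mem t).2.2 (hu_mem t).2.2 ih
  set γs : Fin n → ℝ := fun i => ⨅ t, u t i with hγsdef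
  set ls : Fin n → ℝ := fun i => ⨆ t, l t i with hlsdef
  have hubdd : ∀ i, BddBelow (Set.range fun t => u t i) := by
    intro i; refine ⟨0, ?_⟩; rintro x ⟨t, rfl⟩; exact (hu_mem t).1 i
  have hlbdd : ∀ i, BddAbove (Set.range fun t => l t i) := by
    intro i; refine ⟨v i, ?_⟩; rintro x ⟨t, rfl⟩; exact (hl_mem t).2.1 i
  have htu_i : ∀ i, Tendsto (fun t => u t i) atTop (nhds (γs i)) := by
    intro i
    exact tendsto_atTop_ciInf (fun a b hab => hu_anti hab i) (hubdd i)
  have htl_i : ∀ i, Tendsto (fun t => l t i) atTop (nhds (ls i)) := by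
    intro i
    exact tendsto_atTop_ciSup (fun a b hab => hl_mon hab i) (hlbdd i)
  have htu : Tendsto u atTop (nhds γs) := by
    rw [tendsto_pi_nhds]; exact htu_i
  have htl : Tendsto l atTop (nhds ls) := by
    rw [tendsto_pi_nhds]; exact htl_i
  have hγs0 : 0 ≤ γs := fun i => le_ciInf fun t => (hu_mem t).1 i
  have hγsv : γs ≤ v := fun i => ciInf_le (hubdd i) 0
  have hγsD : γs ∈ D := hSD _ hγs0 hγsv
  have hls0 : 0 ≤ ls := fun i => le_ciSup_of_le (hlbdd i) 0 le_rfl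
  have hlsv : ls ≤ v := fun i => ciSup_le fun t => (hl_mem t).2.1 i
  have hlsD : D.Mem ls := hSD _ hls0 hlsv
  -- fixed points
  have hFγs : F γs = γs := by
    have h1 : Tendsto (fun t => F (u t)) atTop (nhds (F γs)) :=
      ((hcont.continuousAt (hopen.mem_nhds hγsD)).tendsto).comp htu
    have h2 : Tendsto (fun t => F (u t)) atTop (nhds γs) := by
      have h3 := htu.comp (tendsto_add_atTop_nat 1)
      have h4 : ((fun t => u t) ∘ fun t => t + 1) = fun t => F (u t) := by
        funext t; exact hu_succ t
      rwa [h4] at h3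
    exact tendsto_nhds_unique h1 h2
  have hFls : F ls = ls := by
    have h1 : Tendsto (fun t => F (l t)) atTop (nhds (F ls)) :=
      ((hcont.continuousAt (hopen.mem_nhds hlsD)).tendsto).comp htl
    have h2 : Tendsto (fun t => F (l t)) atTop (nhds ls) := by
      have h3 := htl.comp (tendsto_add_atTop_nat 1)
      have h4 : ((fun t => l t) ∘ fun t => t + 1) = fun t => F (l t) := by
        funext t; exact hl_succ t
      rwa [h4] at h3
    exact tendsto_nhds_unique h1 h2
  have hγspos : ∀ i, 0 < γs i := by
    intro i; rw [← hFγs]; exact hpos _ hγsD i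
  have hlspos : ∀ i, 0 < ls i := by
    intro i; rw [← hFls]; exact hpos _ hlsD i
  have hγsltv : ∀ i, γs i < v i := by
    intro i
    have h1 : γs i ≤ u 1 i := ciInf_le (hubdd i) 1
    have h2 : u 1 i = F v i := by rw [hu_succ 0]; simp [hu]
    rw [h2] at h1; exact lt_of_le_of_lt h1 (hFv i)
  have hlsγs : ls ≤ γs := by
    intro i
    refine ciSup_le fun s => le_ciInf fun t => ?_
    calc l s i ≤ l (max s t) i := hl_mon (le_max_left s t) i
      _ ≤ u (max s t) i := hlu (max s t) i
      _ ≤ u t i := hu_anti (le_max_right s t) i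
  have hlsltv : ∀ i, ls i < v i := fun i => lt_of_le_of_lt (hlsγs i) (hγsltv i)
  -- the key uniqueness: ls = γs
  have hkey : ls = γs := by
    rcases isEmpty_or_nonempty (Fin n) with he | hne
    · funext i; exact (he.false i).elim
    obtain ⟨j, hj⟩ := Finite.exists_max (fun i => (v i - ls i) / (v i - γs i))
    set α := (v j - ls j) / (v j - γs j) with hαdef
    have hbpos : ∀ i, 0 < v i - γs i := fun i => sub_pos.2 (hγsltv i)
    have hb'pos : ∀ i, 0 < v i - ls i := fun i => sub_pos.2 (hlsltv i)
    have hbb' : ∀ i, v i - γs i ≤ v i - ls i := fun i => by linarith [hlsγs i]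
    have hα1 : 1 ≤ α := (one_le_div (hbpos j)).2 (hbb' j)
    rcases lt_or_ge 1 α with hα | hα
    · exfalso
      have hα0 : (0 : ℝ) < α := lt_trans one_pos hα
      set w : Fin n → ℝ := fun i => min (α * (v i - γs i)) (v i) with hwdef
      have hwpos : ∀ i, 0 < w i := fun i => lt_min (mul_pos hα0 (hbpos i)) (hvpos i)
      have hwlev : ∀ i, w i ≤ v i := fun i => min_le_right _ _
      have hwleαb : ∀ i, w i ≤ α * (v i - γs i) := fun i => min_le_left _ _
      have hb'w : ∀ i, v i - ls i ≤ w i := by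
        intro i
        refine le_min ?_ (by linarith [hlspos i])
        have := hj i
        rw [div_le_iff₀ (hbpos i)] at this
        linarith [this]
      have hαbj : α * (v j - γs j) = v j - ls j := div_mul_cancel₀ _ (hbpos j).ne'
      set γ'' : Fin n → ℝ := fun i => v i - w i / α with hγ''def
      have hγ''0 : 0 ≤ γ'' := by
        intro i
        have h1 : w i / α ≤ v i := by
          rw [div_le_iff₀ hα0]
          nlinarith [hwlev i, hvpos i]
        simp only [hγ''def, Pi.zero_apply]; linarith
      have hγ''v : γ'' ≤ v := by
        intro i
        have : 0 < w i / α := div_pos (hwpos i) hα0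
        simp only [hγ''def]; linarith
      have hγ''D : γ'' ∈ D := hSD _ hγ''0 hγ''v
      have heq : (fun i => v i - α * (v i - γ'' i)) = fun i => v i - w i := by
        funext i
        simp only [hγ''def]
        rw [show v i - (v i - w i / α) = w i / α by ring, mul_div_cancel₀ _ hα0.ne']
      have hp0 : (0 : Fin n → ℝ) ≤ fun i => v i - w i := fun i => by
        simp only [Pi.zero_apply, sub_nonneg]; exact hwlev i
      have hpv : (fun i => v i - w i) ≤ v := fun i => by
        simp only []; linarith [hwpos i]
      have hpD : (fun i => v i - w i) ∈ D := hSD _ hp0 hpv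
      have hd := hdom α hα γ'' hγ''D hγ''v (by rw [heq]; exact hpD)
      rw [heq] at hd
      have hd' := hd j
      -- γs ≤ γ''
      have hγsγ'' : γs ≤ γ'' := by
        intro i
        have h1 : w i / α ≤ v i - γs i := by
          rw [div_le_iff₀ hα0]
          calc w i ≤ α * (v i - γs i) := hwleαb i
            _ = (v i - γs i) * α := mul_comm _ _
        simp only [hγ''def]; linarith
      have hF1 : F γs j ≤ F γ'' j := hmono γs γ'' hγsD hγ''D hγsγ'' j
      have hF2 : F (fun i => v i - w i) j ≤ F ls j :=
        hmono _ ls hpD hlsD (fun i => by simp only []; linarith [hb'w i]) j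
      rw [hFγs] at hF1
      rw [hFls] at hF2
      have h5 : α * γs j ≤ α * F γ'' j := by
        have := mul_le_mul_of_nonneg_left hF1 hα0.le
        linarith
      have h6 : α * γs j < (α - 1) * v j + ls j := by
        calc α * γs j ≤ α * F γ'' j := h5
          _ < (α - 1) * v j + F (fun i => v i - w i) j := hd'
          _ ≤ (α - 1) * v j + ls j := by linarith
      -- but ls j = v j - α * (v j - γs j)
      have h7 : ls j = v j - α * (v j - γs j) := by linarith [hαbj]
      nlinarith [h6, h7]
    · -- α ≤ 1 : then γs ≤ ls
      refine le_antisymm hlsγs ?_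
      intro i
      have h1 := hj i
      rw [div_le_iff₀ (hbpos i)] at h1
      have h2 : α * (v i - γs i) ≤ v i - γs i := by nlinarith [hbpos i]
      linarith
  -- convergence
  have hconv : ∀ γ0, γ0 ∈ D → 0 ≤ F γ0 → γ0 ≤ v →
      Tendsto (fun t => F^[t] γ0) atTop (nhds γs) := by
    intro γ0 hγ0D hFγ00 hγ0v
    have hsand : ∀ t, l t ≤ F^[t + 1] γ0 ∧ F^[t + 1] γ0 ≤ u (t + 1) := by
      intro t; induction t with
      | zero =>
        constructor
        · simpa [hl] using hFγ00
        · have h1 : F γ0 ≤ F v := hmono γ0 v hγ0D hvD hγ0v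
          have h2 : u 1 = F v := by rw [hu_succ 0]; simp [hu]
          simpa [h2] using h1
      | succ t ih =>
        have hgmem : F^[t + 1] γ0 ∈ D :=
          hSD _ (le_trans (hl_mem t).1 ih.1) (le_trans ih.2 (hu_mem (t + 1)).2.1)
        constructor
        · rw [hl_succ, Function.iterate_succ_apply' F (t + 1)]
          exact hmono _ _ (hl_mem t).2.2 hgmem ih.1
        · rw [hu_succ, Function.iterate_succ_apply' F (t + 1)]
          exact hmono _ _ hgmem (hu_mem (t + 1)).2.2 ih.2
    rw [← tendsto_add_atTop_iff_nat 1]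
    rw [tendsto_pi_nhds]
    intro i
    have hlow : Tendsto (fun t => l t i) atTop (nhds (γs i)) := by
      have := htl_i i; rwa [hkey] at this
    have hup : Tendsto (fun t => u (t + 1) i) atTop (nhds (γs i)) :=
      (htu_i i).comp (tendsto_add_atTop_nat 1)
    exact tendsto_of_tendsto_of_tendsto_of_le_of_le hlow hup
      (fun t => (hsand t).1 i) (fun t => (hsand t).2 i)
  refine ⟨γs, hγsD, hFγs, fun i => ⟨hγspos i, hγsltv i⟩, ?_, hconv⟩
  intro γ' hγ'D hfix hbnd
  have h1 : 0 ≤ F γ' := by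
    intro i; rw [show F γ' = γ' from hfix]; exact (hbnd i).1.le
  have h2 : γ' ≤ v := fun i => (hbnd i).2.le
  have h3 := hconv γ' hγ'D h1 h2
  have h4 : (fun t => F^[t] γ') = fun _ => γ' := by
    funext t; exact hfix.iterate t
  rw [h4] at h3
  exact tendsto_nhds_unique tendsto_const_nhds h3
end

section
/- If f is convex decomposable, the system γᵢⱼ = 1/(1 − Σ_{u∈N(i)\{j}} Γ_{ui}² γ_{ui}) for all directed edges {i,j} has a solution γ* satisfying 0 < γ* < v for every convex-decomposition parameter vector v, and γ* is the unique such solution; moreover, if γ⁽⁰⁾ ≤ v for some such v, then the iterates γ⁽ᵗ⁺¹⁾ = F(γ⁽ᵗ⁾) satisfy 0 < γ⁽ᵗ⁾ < v for t > 0 and converge to γ*. -/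
open Classical Finset Matrix Filter

noncomputable section

namespace Stmt8Aux

variable {n : ℕ} {Γ : Matrix (Fin n) (Fin n) ℝ} {v γ δ : Fin n → Fin n → ℝ}

lemma adj_symm (hsym : Γ.IsSymm) {i j : Fin n} (h : Adj Γ i j) : Adj Γ j i :=
  ⟨h.1.symm, by rw [hsym.apply]; exact h.2⟩

lemma ssum_mono (h : ∀ u i, Adj Γ u i → γ u i ≤ δ u i) (i j : Fin n) :
    Ssum Γ γ i j ≤ Ssum Γ δ i j := by
  apply Finset.sum_le_sum
  intro u hu
  simp only [Finset.mem_filter, Finset.mem_univ, true_and] at hu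
  exact mul_le_mul_of_nonneg_left (h u i hu.1) (sq_nonneg _)

lemma ssum_lt_one (hv : ConvVec Γ v) (i j : Fin n) : Ssum Γ v i j < 1 := by
  refine lt_of_le_of_lt ?_ (hv.2.2 i)
  apply Finset.sum_le_sum_of_subset_of_nonneg
  · intro u hu
    simp only [Finset.mem_filter, Finset.mem_univ, true_and, nbrs] at hu ⊢
    exact hu.1
  · intro u hu _
    simp only [nbrs, Finset.mem_filter, Finset.mem_univ, true_and] at hu
    exact mul_nonneg (sq_nonneg _) (hv.1 u i hu).le

lemma ssum_lt (hsym : Γ.IsSymm) (hv : ConvVec Γ v) {i j : Fin n} (hij : Adj Γ i j) :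
    Ssum Γ v i j < 1 - Γ i j ^ 2 * v j i := by
  have hji : Adj Γ j i := adj_symm hsym hij
  have hsub : insert j (Finset.univ.filter (fun u => Adj Γ u i ∧ u ≠ j)) ⊆ nbrs Γ i := by
    intro u hu
    simp only [Finset.mem_insert, Finset.mem_filter, Finset.mem_univ, true_and, nbrs] at hu ⊢
    rcases hu with rfl | hu
    · exact hji
    · exact hu.1
  have hjnot : j ∉ Finset.univ.filter (fun u => Adj Γ u i ∧ u ≠ j) := by
    simp
  have hle : Γ j i ^ 2 * v j i + Ssum Γ v i j ≤ ∑ u ∈ nbrs Γ i, Γ u i ^ 2 * v u i := by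
    have hins : ∑ u ∈ insert j (Finset.univ.filter (fun u => Adj Γ u i ∧ u ≠ j)),
        Γ u i ^ 2 * v u i = Γ j i ^ 2 * v j i + Ssum Γ v i j := by
      rw [Finset.sum_insert hjnot]; rfl
    rw [← hins]
    apply Finset.sum_le_sum_of_subset_of_nonneg hsub
    intro u hu _
    simp only [nbrs, Finset.mem_filter, Finset.mem_univ, true_and] at hu
    exact mul_nonneg (sq_nonneg _) (hv.1 u i hu).le
  have := hv.2.2 i
  have hΓ : Γ j i = Γ i j := hsym.apply i j
  rw [hΓ] at hle
  linarith

lemma gsq_pos {i j : Fin n} (hij : Adj Γ i j) : 0 < Γ i j ^ 2 :=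
  pow_pos (abs_pos.mpr hij.2) 2 |>.trans_eq (by rw [sq_abs]) |>.trans_le le_rfl

lemma fop_pos {i j : Fin n} (h : Ssum Γ γ i j < 1) : 0 < Fop Γ γ i j :=
  one_div_pos.mpr (by linarith)

lemma fop_mono (h : ∀ u i, Adj Γ u i → γ u i ≤ δ u i) {i j : Fin n}
    (hδ : Ssum Γ δ i j < 1) : Fop Γ γ i j ≤ Fop Γ δ i j := by
  have := ssum_mono h i j
  exact one_div_le_one_div_of_le (by linarith) (by linarith)

lemma fop_lt (hsym : Γ.IsSymm) (hv : ConvVec Γ v) {i j : Fin n} (hij : Adj Γ i j) :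
    Fop Γ v i j < v i j := by
  have hji : Adj Γ j i := adj_symm hsym hij
  have hx : 0 < Γ i j ^ 2 * v j i := mul_pos (gsq_pos hij) (hv.1 j i hji)
  have h1 : Ssum Γ v i j < 1 - Γ i j ^ 2 * v j i := ssum_lt hsym hv hij
  have h2 : Fop Γ v i j < 1 / (Γ i j ^ 2 * v j i) := by
    rw [Fop]
    apply one_div_lt_one_div_of_lt hx
    linarith
  have h3 : 1 / (Γ i j ^ 2 * v j i) ≤ v i j := by
    rw [div_le_iff₀ hx]
    have := hv.2.1 i j hij
    nlinarith
  linarith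


lemma ssum_sub (γ δ : Fin n → Fin n → ℝ) (i j : Fin n) :
    Ssum Γ γ i j - Ssum Γ δ i j =
      ∑ u ∈ Finset.univ.filter (fun u => Adj Γ u i ∧ u ≠ j), Γ u i ^ 2 * (γ u i - δ u i) := by
  rw [Ssum, Ssum, ← Finset.sum_sub_distrib]
  apply Finset.sum_congr rfl
  intros; ring

lemma lim_fixed (hv : ConvVec Γ v) (c : ℕ → Fin n → Fin n → ℝ) (γl : Fin n → Fin n → ℝ)
    (hrec : ∀ t, c (t + 1) = Fop Γ (c t))
    (hub : ∀ t i j, Adj Γ i j → c t i j ≤ v i j)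
    (htd : ∀ i j, Adj Γ i j → Tendsto (fun t => c t i j) atTop (nhds (γl i j))) :
    ∀ i j, Adj Γ i j → γl i j = 1 / (1 - Ssum Γ γl i j) := by
  intro i j hij
  have hlub : ∀ u i', Adj Γ u i' → γl u i' ≤ v u i' := fun u i' h =>
    le_of_tendsto (htd u i' h) (Filter.Eventually.of_forall fun t => hub t u i' h)
  have hS : Ssum Γ γl i j < 1 := lt_of_le_of_lt (ssum_mono hlub i j) (ssum_lt_one hv i j)
  have hStd : Tendsto (fun t => Ssum Γ (c t) i j) atTop (nhds (Ssum Γ γl i j)) := by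
    simp only [Ssum]
    apply tendsto_finset_sum
    intro u hu
    simp only [Finset.mem_filter, Finset.mem_univ, true_and] at hu
    exact (htd u i hu.1).const_mul _
  have h2 : Tendsto (fun t => c (t + 1) i j) atTop (nhds (1 / (1 - Ssum Γ γl i j))) := by
    have heq : (fun t => c (t + 1) i j) = fun t => 1 / (1 - Ssum Γ (c t) i j) :=
      funext fun t => by rw [hrec t]; rfl
    rw [heq]
    exact tendsto_const_nhds.div (tendsto_const_nhds.sub hStd) (by linarith)
  have h3 : Tendsto (fun t => c (t + 1) i j) atTop (nhds (γl i j)) :=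
    (htd i j hij).comp (tendsto_add_atTop_nat 1)
  exact tendsto_nhds_unique h3 h2

lemma fixed_le (hsym : Γ.IsSymm) (hv : ConvVec Γ v)
    (hfixγ : ∀ i j, Adj Γ i j → γ i j = 1 / (1 - Ssum Γ γ i j))
    (hfixδ : ∀ i j, Adj Γ i j → δ i j = 1 / (1 - Ssum Γ δ i j))
    (hγle : ∀ i j, Adj Γ i j → γ i j ≤ Fop Γ v i j)
    (hδle : ∀ i j, Adj Γ i j → δ i j ≤ Fop Γ v i j) :
    ∀ i j, Adj Γ i j → δ i j ≤ γ i j := by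
  by_contra hc
  push_neg at hc
  obtain ⟨i0, j0, hadj0, hlt0⟩ := hc
  have hγltv : ∀ a b, Adj Γ a b → γ a b < v a b := fun a b h =>
    lt_of_le_of_lt (hγle a b h) (fop_lt hsym hv h)
  have hδltv : ∀ a b, Adj Γ a b → δ a b < v a b := fun a b h =>
    lt_of_le_of_lt (hδle a b h) (fop_lt hsym hv h)
  have hz : ∀ a b, Adj Γ a b → 0 < v a b - γ a b := fun a b h => sub_pos.mpr (hγltv a b h)
  obtain ⟨p, hpT, hmax⟩ := Finset.exists_max_image
    (Finset.univ.filter (fun p : Fin n × Fin n => Adj Γ p.1 p.2))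
    (fun p => (δ p.1 p.2 - γ p.1 p.2) / (v p.1 p.2 - γ p.1 p.2))
    ⟨(i0, j0), by simp [hadj0]⟩
  obtain ⟨i, j⟩ := p
  simp only [Finset.mem_filter, Finset.mem_univ, true_and] at hpT
  have hij : Adj Γ i j := hpT
  have hρ0 : (δ i0 j0 - γ i0 j0) / (v i0 j0 - γ i0 j0) ≤
      (δ i j - γ i j) / (v i j - γ i j) := hmax (i0, j0) (by simp [hadj0])
  have hρpos : 0 < (δ i j - γ i j) / (v i j - γ i j) :=
    lt_of_lt_of_le (div_pos (sub_pos.mpr hlt0) (hz _ _ hadj0)) hρ0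
  set ρ : ℝ := (δ i j - γ i j) / (v i j - γ i j) with hρdef
  have hd : ∀ a b, Adj Γ a b → δ a b - γ a b ≤ ρ * (v a b - γ a b) := by
    intro a b h
    have h1 : (δ a b - γ a b) / (v a b - γ a b) ≤ ρ := hmax (a, b) (by simp [h])
    calc δ a b - γ a b = (δ a b - γ a b) / (v a b - γ a b) * (v a b - γ a b) := by
          rw [div_mul_cancel₀ _ (ne_of_gt (hz a b h))]
      _ ≤ ρ * (v a b - γ a b) := by
          apply mul_le_mul_of_nonneg_right h1 (hz a b h).le
  -- facts at edge (i,j)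
  have hSv : Ssum Γ v i j < 1 := ssum_lt_one hv i j
  have hB : Ssum Γ γ i j < 1 :=
    lt_of_le_of_lt (ssum_mono (fun a b h => (hγltv a b h).le) i j) hSv
  have hA : Ssum Γ δ i j < 1 :=
    lt_of_le_of_lt (ssum_mono (fun a b h => (hδltv a b h).le) i j) hSv
  have hSvB : Ssum Γ γ i j ≤ Ssum Γ v i j := ssum_mono (fun a b h => (hγltv a b h).le) i j
  have hx : δ i j * (1 - Ssum Γ δ i j) = 1 := by
    rw [hfixδ i j hij]
    exact one_div_mul_cancel (ne_of_gt (by linarith))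
  have hy : γ i j * (1 - Ssum Γ γ i j) = 1 := by
    rw [hfixγ i j hij]
    exact one_div_mul_cancel (ne_of_gt (by linarith))
  have hFv : Fop Γ v i j * (1 - Ssum Γ v i j) = 1 := by
    rw [Fop]
    exact one_div_mul_cancel (ne_of_gt (by linarith))
  have hxpos : 0 < δ i j := by
    rw [hfixδ i j hij]; exact one_div_pos.mpr (by linarith)
  have hypos : 0 < γ i j := by
    rw [hfixγ i j hij]; exact one_div_pos.mpr (by linarith)
  have key1 : δ i j - γ i j = δ i j * γ i j * (Ssum Γ δ i j - Ssum Γ γ i j) := by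
    linear_combination γ i j * hx - δ i j * hy
  have key2 : Ssum Γ δ i j - Ssum Γ γ i j ≤ ρ * (Ssum Γ v i j - Ssum Γ γ i j) := by
    rw [ssum_sub, ssum_sub, Finset.mul_sum]
    apply Finset.sum_le_sum
    intro u hu
    simp only [Finset.mem_filter, Finset.mem_univ, true_and] at hu
    calc Γ u i ^ 2 * (δ u i - γ u i) ≤ Γ u i ^ 2 * (ρ * (v u i - γ u i)) :=
          mul_le_mul_of_nonneg_left (hd u i hu.1) (sq_nonneg _)
      _ = ρ * (Γ u i ^ 2 * (v u i - γ u i)) := by ring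
  have key3 : Fop Γ v i j - γ i j = Fop Γ v i j * γ i j * (Ssum Γ v i j - Ssum Γ γ i j) := by
    linear_combination γ i j * hFv - Fop Γ v i j * hy
  have hxFv : δ i j ≤ Fop Γ v i j := hδle i j hij
  have hFvlt : Fop Γ v i j < v i j := fop_lt hsym hv hij
  have hstep1 : δ i j - γ i j ≤ ρ * (Fop Γ v i j - γ i j) := by
    calc δ i j - γ i j = δ i j * γ i j * (Ssum Γ δ i j - Ssum Γ γ i j) := key1
      _ ≤ δ i j * γ i j * (ρ * (Ssum Γ v i j - Ssum Γ γ i j)) :=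
          mul_le_mul_of_nonneg_left key2 (mul_pos hxpos hypos).le
      _ = δ i j * (γ i j * ρ * (Ssum Γ v i j - Ssum Γ γ i j)) := by ring
      _ ≤ Fop Γ v i j * (γ i j * ρ * (Ssum Γ v i j - Ssum Γ γ i j)) := by
          apply mul_le_mul_of_nonneg_right hxFv
          have : 0 ≤ Ssum Γ v i j - Ssum Γ γ i j := by linarith
          positivity
      _ = ρ * (Fop Γ v i j * γ i j * (Ssum Γ v i j - Ssum Γ γ i j)) := by ring
      _ = ρ * (Fop Γ v i j - γ i j) := by rw [← key3]
  have hstep2 : ρ * (Fop Γ v i j - γ i j) < ρ * (v i j - γ i j) :=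
    mul_lt_mul_of_pos_left (by linarith) hρpos
  have heq : δ i j - γ i j = ρ * (v i j - γ i j) := by
    rw [hρdef, div_mul_cancel₀ _ (ne_of_gt (hz i j hij))]
  linarith

end Stmt8Aux

open Stmt8Aux

/-- Quadratic parameter convergence (Theorem 2): if `f` is convex decomposable,
the fixed-point system has a solution `γ*` with `0 < γ* < v` for every convex
decomposition vector `v`, it is the unique such solution, and any iteration
started below some `v ∈ 𝒱` stays in `(0, v)` and converges to `γ*`. -/
theorem stmt8 {n : ℕ} (Γ : Matrix (Fin n) (Fin n) ℝ) (hsym : Γ.IsSymm)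
    (hdiag : ∀ i, Γ i i = 1) (hpd : Γ.PosDef)
    (hcd : ∃ v, ConvVec Γ v) :
    ∃ γs : Fin n → Fin n → ℝ,
      (∀ i j, Adj Γ i j → γs i j = 1 / (1 - Ssum Γ γs i j)) ∧
      (∀ v, ConvVec Γ v → ∀ i j, Adj Γ i j → 0 < γs i j ∧ γs i j < v i j) ∧
      (∀ γ' : Fin n → Fin n → ℝ,
        (∀ i j, Adj Γ i j → γ' i j = 1 / (1 - Ssum Γ γ' i j)) →
        (∀ v, ConvVec Γ v → ∀ i j, Adj Γ i j → 0 < γ' i j ∧ γ' i j < v i j) →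
        (∀ i j, Adj Γ i j → γ' i j = γs i j)) ∧
      (∀ (γ : ℕ → Fin n → Fin n → ℝ) (v : Fin n → Fin n → ℝ), ConvVec Γ v →
        (∀ i j, Adj Γ i j → γ 0 i j ≤ v i j) →
        (∀ t, γ (t + 1) = Fop Γ (γ t)) →
        (∀ t, 0 < t → ∀ i j, Adj Γ i j → 0 < γ t i j ∧ γ t i j < v i j) ∧
        (∀ i j, Adj Γ i j →
          Tendsto (fun t => γ t i j) atTop (nhds (γs i j)))) := by
  classical
  obtain ⟨v₀, hv₀⟩ := hcd
  obtain ⟨a, hadef⟩ : ∃ a : ℕ → Fin n → Fin n → ℝ,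
      a = fun t => (Fop Γ)^[t] (fun _ _ => 0) := ⟨_, rfl⟩
  have ha0 : ∀ i j, a 0 i j = 0 := by intro i j; rw [hadef]; rfl
  have ha_rec : ∀ t, a (t + 1) = Fop Γ (a t) := by
    intro t; rw [hadef]; exact Function.iterate_succ_apply' _ _ _
  have hAle : ∀ v, ConvVec Γ v → ∀ t i j, Adj Γ i j → a t i j ≤ v i j := by
    intro v hv t
    induction t with
    | zero => intro i j hij; rw [ha0]; exact (hv.1 i j hij).le
    | succ t ih =>
      intro i j hij
      rw [ha_rec]
      exact le_of_lt (lt_of_le_of_lt (fop_mono ih (ssum_lt_one hv i j)) (fop_lt hsym hv hij))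
  have hSa : ∀ t i j, Ssum Γ (a t) i j < 1 := fun t i j =>
    lt_of_le_of_lt (ssum_mono (fun u i' h => hAle v₀ hv₀ t u i' h) i j) (ssum_lt_one hv₀ i j)
  have hstep : ∀ t i j, a t i j ≤ a (t + 1) i j := by
    intro t
    induction t with
    | zero =>
      intro i j
      rw [ha0, ha_rec 0]
      exact (fop_pos (hSa 0 i j)).le
    | succ t ih =>
      intro i j
      rw [ha_rec t, ha_rec (t + 1)]
      exact fop_mono (fun u i' _ => ih u i') (hSa (t + 1) i j)
  have hmono : ∀ i j, Monotone fun t => a t i j := fun i j =>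
    monotone_nat_of_le_succ fun t => hstep t i j
  obtain ⟨γs, hγsdef⟩ : ∃ g : Fin n → Fin n → ℝ, g = fun i j => ⨆ t, a t i j := ⟨_, rfl⟩
  have hbdd : ∀ i j, Adj Γ i j → BddAbove (Set.range fun t => a t i j) := fun i j hij =>
    ⟨v₀ i j, by rintro x ⟨t, rfl⟩; exact hAle v₀ hv₀ t i j hij⟩
  have htda : ∀ i j, Adj Γ i j → Tendsto (fun t => a t i j) atTop (nhds (γs i j)) := by
    intro i j hij
    rw [hγsdef]
    exact tendsto_atTop_ciSup (hmono i j) (hbdd i j hij)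
  have hγs_le_F : ∀ v, ConvVec Γ v → ∀ i j, Adj Γ i j → γs i j ≤ Fop Γ v i j := by
    intro v hv i j hij
    rw [hγsdef]
    apply ciSup_le
    intro t
    cases t with
    | zero => rw [ha0]; exact (fop_pos (ssum_lt_one hv i j)).le
    | succ t => rw [ha_rec]; exact fop_mono (hAle v hv t) (ssum_lt_one hv i j)
  have hγs_lt : ∀ v, ConvVec Γ v → ∀ i j, Adj Γ i j → γs i j < v i j :=
    fun v hv i j hij => lt_of_le_of_lt (hγs_le_F v hv i j hij) (fop_lt hsym hv hij)
  have ha1 : ∀ i j, a 1 i j = 1 := by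
    intro i j
    rw [ha_rec 0]
    show 1 / (1 - Ssum Γ (a 0) i j) = 1
    have : Ssum Γ (a 0) i j = 0 := by
      rw [Ssum]
      apply Finset.sum_eq_zero
      intro u _
      rw [ha0, mul_zero]
    rw [this]
    norm_num
  have hγs_pos : ∀ i j, Adj Γ i j → 0 < γs i j := by
    intro i j hij
    have h1 : a 1 i j ≤ γs i j := by
      rw [hγsdef]; exact le_ciSup (hbdd i j hij) 1
    rw [ha1] at h1
    linarith
  have hγs_fix : ∀ i j, Adj Γ i j → γs i j = 1 / (1 - Ssum Γ γs i j) :=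
    lim_fixed hv₀ a γs ha_rec (hAle v₀ hv₀) htda
  -- upper sequences
  have hkey : ∀ v, ConvVec Γ v →
      (∀ t i j, Adj Γ i j → (Fop Γ)^[t] v i j ≤ v i j) ∧
      (∀ i j, Adj Γ i j → Tendsto (fun t => (Fop Γ)^[t] v i j) atTop (nhds (γs i j))) := by
    intro v hv
    obtain ⟨b, hbdef⟩ : ∃ b : ℕ → Fin n → Fin n → ℝ, b = fun t => (Fop Γ)^[t] v := ⟨_, rfl⟩
    have hb0 : b 0 = v := by rw [hbdef]; rfl
    have hb_rec : ∀ t, b (t + 1) = Fop Γ (b t) := by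
      intro t; rw [hbdef]; exact Function.iterate_succ_apply' _ _ _
    have hb_le : ∀ t i j, Adj Γ i j → b t i j ≤ v i j := by
      intro t
      induction t with
      | zero => intro i j _; rw [hb0]
      | succ t ih =>
        intro i j hij
        rw [hb_rec]
        exact le_of_lt (lt_of_le_of_lt (fop_mono ih (ssum_lt_one hv i j)) (fop_lt hsym hv hij))
    have hSb : ∀ t i j, Ssum Γ (b t) i j < 1 := fun t i j =>
      lt_of_le_of_lt (ssum_mono (fun u i' h => hb_le t u i' h) i j) (ssum_lt_one hv i j)
    have hb_pos : ∀ t i j, Adj Γ i j → 0 < b t i j := by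
      intro t
      cases t with
      | zero => intro i j hij; rw [hb0]; exact hv.1 i j hij
      | succ t => intro i j hij; rw [hb_rec]; exact fop_pos (hSb t i j)
    have hb_anti : ∀ t i j, Adj Γ i j → b (t + 1) i j ≤ b t i j := by
      intro t
      induction t with
      | zero =>
        intro i j hij
        rw [hb_rec 0, hb0]
        exact (fop_lt hsym hv hij).le
      | succ t ih =>
        intro i j hij
        rw [hb_rec (t + 1)]
        conv_rhs => rw [hb_rec t]
        exact fop_mono (fun u i' h => ih u i' h) (hSb t i j)
    obtain ⟨ue, huedef⟩ : ∃ u : Fin n → Fin n → ℝ, u = fun i j => ⨅ t, b t i j := ⟨_, rfl⟩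
    have hbddb : ∀ i j, Adj Γ i j → BddBelow (Set.range fun t => b t i j) := fun i j hij =>
      ⟨0, by rintro x ⟨t, rfl⟩; exact (hb_pos t i j hij).le⟩
    have htdb : ∀ i j, Adj Γ i j → Tendsto (fun t => b t i j) atTop (nhds (ue i j)) := by
      intro i j hij
      rw [huedef]
      exact tendsto_atTop_ciInf (antitone_nat_of_succ_le fun t => hb_anti t i j hij)
        (hbddb i j hij)
    have hue_fix : ∀ i j, Adj Γ i j → ue i j = 1 / (1 - Ssum Γ ue i j) :=
      lim_fixed hv b ue hb_rec hb_le htdb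
    have hue_le_F : ∀ i j, Adj Γ i j → ue i j ≤ Fop Γ v i j := by
      intro i j hij
      have h1 : ue i j ≤ b 1 i j := by
        rw [huedef]; exact ciInf_le (hbddb i j hij) 1
      rw [hb_rec 0, hb0] at h1
      exact h1
    have heq : ∀ i j, Adj Γ i j → ue i j = γs i j := by
      intro i j hij
      have h1 := fixed_le hsym hv hγs_fix hue_fix (hγs_le_F v hv) hue_le_F i j hij
      have h2 := fixed_le hsym hv hue_fix hγs_fix hue_le_F (hγs_le_F v hv) i j hij
      linarith
    constructor
    · intro t i j hij
      have := hb_le t i j hij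
      rwa [hbdef] at this
    · intro i j hij
      have := htdb i j hij
      rw [heq i j hij, hbdef] at this
      exact this
  refine ⟨γs, hγs_fix, fun v hv i j hij => ⟨hγs_pos i j hij, hγs_lt v hv i j hij⟩, ?_, ?_⟩
  · -- uniqueness
    intro γ' hfix' hbnd' i j hij
    have hγ'leF : ∀ i j, Adj Γ i j → γ' i j ≤ Fop Γ v₀ i j := by
      intro i j hij
      rw [hfix' i j hij]
      show Fop Γ γ' i j ≤ Fop Γ v₀ i j
      exact fop_mono (fun u i' h => ((hbnd' v₀ hv₀ u i' h).2).le) (ssum_lt_one hv₀ i j)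
    exact le_antisymm
      (fixed_le hsym hv₀ hγs_fix hfix' (hγs_le_F v₀ hv₀) hγ'leF i j hij)
      (fixed_le hsym hv₀ hfix' hγs_fix hγ'leF (hγs_le_F v₀ hv₀) i j hij)
  · -- convergence
    intro γ v hv h0 hrec
    obtain ⟨hb_le, htdb⟩ := hkey v hv
    have hγle : ∀ t i j, Adj Γ i j → γ t i j ≤ v i j := by
      intro t
      induction t with
      | zero => exact h0
      | succ t ih =>
        intro i j hij
        rw [hrec t]
        exact le_of_lt (lt_of_le_of_lt (fop_mono ih (ssum_lt_one hv i j)) (fop_lt hsym hv hij))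
    have hSγ : ∀ t i j, Ssum Γ (γ t) i j < 1 := fun t i j =>
      lt_of_le_of_lt (ssum_mono (fun u i' h => hγle t u i' h) i j) (ssum_lt_one hv i j)
    have hγpos : ∀ t i j, Adj Γ i j → 0 < γ (t + 1) i j := by
      intro t i j hij
      rw [hrec t]
      exact fop_pos (hSγ t i j)
    have hsand : ∀ t i j, Adj Γ i j →
        a t i j ≤ γ (t + 1) i j ∧ γ (t + 1) i j ≤ (Fop Γ)^[t + 1] v i j := by
      intro t
      induction t with
      | zero =>
        intro i j hij
        constructor
        · rw [ha0]; exact (hγpos 0 i j hij).le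
        · rw [hrec 0, Function.iterate_one]
          exact fop_mono h0 (ssum_lt_one hv i j)
      | succ t ih =>
        intro i j hij
        constructor
        · rw [ha_rec t, hrec (t + 1)]
          exact fop_mono (fun u i' h => (ih u i' h).1) (hSγ (t + 1) i j)
        · rw [hrec (t + 1), Function.iterate_succ_apply' (Fop Γ) (t + 1) v]
          apply fop_mono (fun u i' h => (ih u i' h).2)
          exact lt_of_le_of_lt (ssum_mono (fun u i' h => hb_le (t + 1) u i' h) i j)
            (ssum_lt_one hv i j)
    constructor
    · intro t ht i j hij
      obtain ⟨s, rfl⟩ : ∃ s, t = s + 1 := ⟨t - 1, (Nat.succ_pred_eq_of_pos ht).symm⟩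
      refine ⟨hγpos s i j hij, ?_⟩
      have h1 : γ (s + 1) i j ≤ Fop Γ v i j := by
        rw [hrec s]
        exact fop_mono (hγle s) (ssum_lt_one hv i j)
      exact lt_of_le_of_lt h1 (fop_lt hsym hv hij)
    · intro i j hij
      have hup : Tendsto (fun t => (Fop Γ)^[t + 1] v i j) atTop (nhds (γs i j)) :=
        (htdb i j hij).comp (tendsto_add_atTop_nat 1)
      have hmid : Tendsto (fun t => γ (t + 1) i j) atTop (nhds (γs i j)) :=
        tendsto_of_tendsto_of_tendsto_of_le_of_le (htda i j hij) hup
          (fun t => (hsand t i j hij).1) (fun t => (hsand t i j hij).2)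
      exact (tendsto_add_atTop_iff_nat 1).mp hmid
end
end

section
/- If f is convex decomposable (equivalently, Γ is walk-summable), then the series Σ_{t=0}^∞ Rᵗ converges absolutely and Γ⁻¹ = Σ_{t=0}^∞ Rᵗ, where R = I − Γ. -/
/-!
By Gelfand's formula, `ρ(|R|) < 1` makes `‖|R|ᵗ‖` decay geometrically, and the triangle inequality
(summing over walks of length `t`) bounds `|(Rᵗ)ᵢⱼ|` by `(|R|ᵗ)ᵢⱼ`. Hence the Neumann series `Σ Rᵗ`
converges absolutely, and telescoping gives `(I - R) Σ Rᵗ = I`, i.e. `Γ Σ Rᵗ = I`.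
-/

open Matrix Filter
open scoped NNReal

theorem summable_norm_pow_of_spectralRadius_lt_one {A : Type*} [NormedRing A]
    [NormedAlgebra ℂ A] [CompleteSpace A] {a : A} (ha : spectralRadius ℂ a < 1) :
    Summable (fun k : ℕ => ‖a ^ k‖) := by
  obtain ⟨r, har, hr1⟩ := exists_between ha
  lift r to ℝ≥0 using (hr1.trans_le le_top).ne
  have hr1' : r < 1 := by exact_mod_cast hr1
  refine .of_norm_bounded_eventually_nat
    (NNReal.summable_coe.2 (NNReal.summable_geometric hr1')) ?_
  have gelfand := spectrum.pow_nnnorm_pow_one_div_tendsto_nhds_spectralRadius a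
  filter_upwards [gelfand.eventually_lt_const har, eventually_gt_atTop 0] with k hk hk0
  rw [one_div, ENNReal.rpow_inv_lt_iff (by positivity), ENNReal.rpow_natCast] at hk
  rw [norm_norm]
  exact_mod_cast hk.le

namespace Matrix

variable {ι : Type*} [Fintype ι]

attribute [local instance] Matrix.linftyOpSeminormedAddCommGroup in
theorem norm_apply_le_linfty_opNorm {m n α : Type*} [Fintype m] [Fintype n]
    [SeminormedAddCommGroup α] (A : Matrix m n α) (i : m) (j : n) : ‖A i j‖ ≤ ‖A‖ := by
  have : ‖A i j‖₊ ≤ ‖A‖₊ := by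
    rw [linfty_opNNNorm_def]
    calc ‖A i j‖₊ ≤ ∑ k, ‖A i k‖₊ :=
          Finset.single_le_sum (f := fun k => ‖A i k‖₊) (fun _ _ => zero_le) (Finset.mem_univ j)
      _ ≤ _ := Finset.le_sup (f := fun i => ∑ k, ‖A i k‖₊) (Finset.mem_univ i)
  exact_mod_cast this

attribute [local instance] Matrix.linftyOpNormedRing Matrix.linftyOpNormedAlgebra in
theorem summable_norm_pow_apply_of_spectralRadius_lt_one [DecidableEq ι] {B : Matrix ι ι ℂ}
    (hB : spectralRadius ℂ B < 1) (i j : ι) : Summable (fun k : ℕ => ‖(B ^ k) i j‖) :=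
  (summable_norm_pow_of_spectralRadius_lt_one hB).of_nonneg_of_le (fun _ => norm_nonneg _)
    fun _ => norm_apply_le_linfty_opNorm _ i j

theorem abs_pow_apply_le_pow_map_abs [DecidableEq ι] {R : Type*} [Ring R] [LinearOrder R]
    [IsStrictOrderedRing R] (A : Matrix ι ι R) (t : ℕ) (i j : ι) :
    |(A ^ t) i j| ≤ ((A.map abs) ^ t) i j := by
  induction t generalizing j with
  | zero => by_cases h : i = j <;> simp [h]
  | succ t ih =>
    rw [pow_succ, pow_succ, mul_apply, mul_apply]
    refine (Finset.abs_sum_le_sum_abs _ _).trans (Finset.sum_le_sum fun k _ => ?_)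
    rw [abs_mul]
    exact mul_le_mul_of_nonneg_right (ih k) (abs_nonneg _)

theorem summable_abs_pow_apply_of_spectralRadius_lt_one [DecidableEq ι] {R : Matrix ι ι ℝ}
    (hR : spectralRadius ℂ ((R.map abs).map Complex.ofReal) < 1) (i j : ι) :
    Summable (fun t : ℕ => |(R ^ t) i j|) := by
  have hM : Summable (fun t : ℕ => |((R.map abs) ^ t) i j|) := by
    have hpow (t : ℕ) : (R.map abs).map Complex.ofReal ^ t = ((R.map abs) ^ t).map Complex.ofReal :=
      (map_pow Complex.ofRealHom.mapMatrix _ t).symm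
    simpa only [hpow, map_apply, Complex.norm_real, Real.norm_eq_abs]
      using summable_norm_pow_apply_of_spectralRadius_lt_one hR i j
  exact hM.of_nonneg_of_le (fun _ => abs_nonneg _)
    fun t => (abs_pow_apply_le_pow_map_abs R t i j).trans (le_abs_self _)

end Matrix

theorem stmt10_general {n : ℕ} (Γ : Matrix (Fin n) (Fin n) ℝ)
    (hws : spectralRadius ℂ (((1 - Γ).map (fun a => |a|)).map (Complex.ofReal)) < 1) :
    (∀ i j, Summable (fun t : ℕ => |((1 - Γ) ^ t) i j|)) ∧
    Summable (fun t : ℕ => (1 - Γ) ^ t) ∧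
    Γ⁻¹ = ∑' t : ℕ, (1 - Γ) ^ t := by
  have habs := summable_abs_pow_apply_of_spectralRadius_lt_one hws
  have hsum : Summable (fun t : ℕ => (1 - Γ) ^ t) :=
    Pi.summable.2 fun i => Pi.summable.2 fun j => (habs i j).of_abs
  refine ⟨habs, hsum, inv_eq_right_inv ?_⟩
  simpa only [sub_sub_cancel] using hsum.one_sub_mul_tsum_pow

/-- If `Γ` is walk-summable (spectral radius of `|R| = |I − Γ|` less than 1), then
`Σ_{t} Rᵗ` converges absolutely and `Γ⁻¹ = Σ_{t=0}^∞ Rᵗ`. -/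
theorem stmt10 {n : ℕ} (Γ : Matrix (Fin n) (Fin n) ℝ) (hsym : Γ.IsSymm)
    (hdiag : ∀ i, Γ i i = 1) (hpd : Γ.PosDef)
    (hws : spectralRadius ℂ (((1 - Γ).map (fun a => |a|)).map (Complex.ofReal)) < 1) :
    (∀ i j, Summable (fun t : ℕ => |((1 - Γ) ^ t) i j|)) ∧
    Summable (fun t : ℕ => (1 - Γ) ^ t) ∧
    Γ⁻¹ = ∑' t : ℕ, (1 - Γ) ^ t :=
  stmt10_general Γ hws
end

section
/- Existence of a convex decomposition of f(x) = (1/2)xᵀΓx − hᵀx implies walk-summability of Γ, i.e., the spectral radius of |I − Γ| is less than 1. -/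
open Classical Finset Matrix

noncomputable section

/-- The quadratic objective `f(x) = (1/2) xᵀ Γ x − hᵀ x`. -/
def quadObj {n : ℕ} (Γ : Matrix (Fin n) (Fin n) ℝ) (h : Fin n → ℝ)
    (x : Fin n → ℝ) : ℝ :=
  (1 / 2) * (x ⬝ᵥ Γ.mulVec x) - h ⬝ᵥ x

/-- A convex decomposition of `f`: strictly convex quadratic single-vertex functions and
convex quadratic pairwise functions, over vertices and edges, summing to `f`. -/
def ConvexDecomposable {n : ℕ} (Γ : Matrix (Fin n) (Fin n) ℝ) (h : Fin n → ℝ) : Prop :=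
  ∃ (Fi : Fin n → ℝ → ℝ) (Fij : Fin n → Fin n → ℝ → ℝ → ℝ),
    (∀ i, (∃ a b c : ℝ, ∀ x, Fi i x = a * x ^ 2 + b * x + c) ∧
      StrictConvexOn ℝ Set.univ (Fi i)) ∧
    (∀ i j, Adj Γ i j →
      ((∃ a b c d e k : ℝ, ∀ x y, Fij i j x y =
          a * x ^ 2 + b * x * y + c * y ^ 2 + d * x + e * y + k) ∧
        ConvexOn ℝ Set.univ (fun p : ℝ × ℝ => Fij i j p.1 p.2))) ∧
    (∀ x : Fin n → ℝ, quadObj Γ h x =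
      ∑ i, Fi i (x i) +
        ∑ p ∈ Finset.univ.filter (fun p : Fin n × Fin n => Adj Γ p.1 p.2 ∧ p.1 < p.2),
          Fij p.1 p.2 (x p.1) (x p.2))

/-!
A convex decomposition turns `xᵀΓx = f x + f (-x) - 2 f 0` into a sum of terms `dᵢ xᵢ²` with
`dᵢ > 0` and, over the edges, positive semidefinite binary forms in `(xᵢ, xⱼ)`; polarization shows
that the cross coefficient of the form on the edge `(i, j)` is `2 Γᵢⱼ`. On the nonnegative orthant
a positive semidefinite binary form dominates `2 |Γᵢⱼ| xᵢ xⱼ`, so `N = |I - Γ|` satisfies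
`yᵀ N y + ∑ dᵢ yᵢ² ≤ yᵀ y` for `y ≥ 0`. As `|zᵀ N z| ≤ |z|ᵀ N |z|`, every `z ≠ 0` has
`|zᵀ N z| < zᵀ z`, and since `N` is symmetric its eigenvalues are Rayleigh quotients, hence lie
in `(-1, 1)`.
-/

namespace Matrix.IsHermitian

variable {ι : Type*} [Fintype ι] [DecidableEq ι] {N : Matrix ι ι ℝ}

lemma spectrum_map_ofReal_subset (hN : N.IsHermitian) :
    spectrum ℂ (N.map Complex.ofReal) ⊆ Set.range fun i => (hN.eigenvalues i : ℂ) := by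
  intro μ hμ
  rw [mem_spectrum_iff_isRoot_charpoly,
    show N.map Complex.ofReal = N.map Complex.ofRealHom from rfl, charpoly_map, hN.charpoly_eq,
    Polynomial.map_prod, Polynomial.isRoot_prod] at hμ
  obtain ⟨i, -, hi⟩ := hμ
  rw [Polynomial.map_sub, Polynomial.map_X, Polynomial.map_C] at hi
  exact ⟨i, Polynomial.root_X_sub_C.1 hi⟩

lemma abs_eigenvalues_lt_one (hN : N.IsHermitian)
    (hlt : ∀ z : ι → ℝ, z ≠ 0 → |z ⬝ᵥ N *ᵥ z| < z ⬝ᵥ z) (i : ι) :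
    |hN.eigenvalues i| < 1 := by
  set v : ι → ℝ := (hN.eigenvectorBasis i).ofLp
  have hv : v ≠ 0 := fun h0 =>
    hN.eigenvectorBasis.orthonormal.ne_zero i (by ext t; exact congrFun h0 t)
  have hvv : 0 < v ⬝ᵥ v := by
    simpa using dotProduct_star_self_pos_iff.2 hv
  have key := hlt v hv
  rw [hN.mulVec_eigenvectorBasis i, dotProduct_smul, smul_eq_mul, abs_mul,
    abs_of_pos hvv] at key
  exact (mul_lt_iff_lt_one_left hvv).1 key

theorem spectralRadius_map_ofReal_lt_one (hN : N.IsHermitian)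
    (hlt : ∀ z : ι → ℝ, z ≠ 0 → |z ⬝ᵥ N *ᵥ z| < z ⬝ᵥ z) :
    spectralRadius ℂ (N.map Complex.ofReal) < 1 := by
  calc spectralRadius ℂ (N.map Complex.ofReal)
      ≤ univ.sup fun i => (‖(hN.eigenvalues i : ℂ)‖₊ : ENNReal) := by
        rw [sup_univ_eq_iSup]
        refine iSup₂_le fun μ hμ => ?_
        obtain ⟨i, rfl⟩ := hN.spectrum_map_ofReal_subset hμ
        exact le_iSup (fun i => (‖(hN.eigenvalues i : ℂ)‖₊ : ENNReal)) i
    _ < 1 := by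
        refine (Finset.sup_lt_iff zero_lt_one).2 fun i _ => ?_
        rw [Complex.nnnorm_real, ENNReal.coe_lt_one_iff, ← NNReal.coe_lt_coe]
        simpa using hN.abs_eigenvalues_lt_one hlt i

end Matrix.IsHermitian

section AbsBounds

variable {ι : Type*} [Fintype ι]

lemma abs_mul_mul_le_of_forall_nonneg {a b c : ℝ}
    (h : ∀ u v, 0 ≤ a * u ^ 2 + b * u * v + c * v ^ 2) {u v : ℝ} (hu : 0 ≤ u) (hv : 0 ≤ v) :
    |b| * u * v ≤ a * u ^ 2 + c * v ^ 2 := by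
  have huv := mul_nonneg hu hv
  rcases abs_cases b with ⟨hb, -⟩ | ⟨hb, -⟩ <;> rw [hb] <;> nlinarith [h u v, h u (-v)]

lemma Matrix.abs_dotProduct_mulVec_le {N : Matrix ι ι ℝ} (hN : ∀ i j, 0 ≤ N i j) (z : ι → ℝ) :
    |z ⬝ᵥ N *ᵥ z| ≤ |z| ⬝ᵥ N *ᵥ |z| := by
  simp only [dotProduct, mulVec, Pi.abs_apply]
  refine (abs_sum_le_sum_abs _ _).trans (sum_le_sum fun i _ => ?_)
  rw [abs_mul]
  refine mul_le_mul_of_nonneg_left ((abs_sum_le_sum_abs _ _).trans_eq ?_) (abs_nonneg _)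
  simp [abs_mul, abs_of_nonneg (hN i _)]

end AbsBounds

section PairwiseQuadForm

variable {ι : Type*} [Fintype ι] [LinearOrder ι]

lemma Finset.sum_prod_eq_sum_diag_add_sum_lt {M : Type*} [AddCommMonoid M] (F : ι × ι → M) :
    ∑ p, F p = ∑ i, F (i, i) + ∑ p : ι × ι with p.1 < p.2, (F p + F p.swap) := by
  have hsplit : ∀ p : ι × ι, F p = (if p.1 = p.2 then F p else 0) +
      ((if p.1 < p.2 then F p else 0) + (if p.2 < p.1 then F p else 0)) := by
    rintro ⟨i, j⟩
    rcases lt_trichotomy i j with h | rfl | h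
    · simp [h, h.ne, h.not_gt]
    · simp
    · simp [h, h.ne', h.not_gt]
  have hswap : ∑ p : ι × ι with p.2 < p.1, F p = ∑ p : ι × ι with p.1 < p.2, F p.swap :=
    Finset.sum_equiv (Equiv.prodComm ι ι) (by simp) (by simp)
  rw [sum_congr rfl fun p _ => hsplit p, sum_add_distrib, sum_add_distrib]
  simp only [← sum_filter]
  rw [hswap, ← sum_add_distrib, sum_filter, Fintype.sum_prod_type]
  simp

lemma Matrix.IsSymm.dotProduct_mulVec_self {M : Matrix ι ι ℝ} (hM : M.IsSymm) (x : ι → ℝ) :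
    x ⬝ᵥ M *ᵥ x =
      ∑ i, M i i * x i ^ 2 + 2 * ∑ p : ι × ι with p.1 < p.2, M p.1 p.2 * x p.1 * x p.2 := by
  have hexp : x ⬝ᵥ M *ᵥ x = ∑ p : ι × ι, M p.1 p.2 * x p.1 * x p.2 := by
    simp only [dotProduct, mulVec, mul_sum, Fintype.sum_prod_type]
    exact sum_congr rfl fun i _ => sum_congr rfl fun j _ => by ring
  rw [hexp, sum_prod_eq_sum_diag_add_sum_lt, mul_sum]
  congr 1
  · exact sum_congr rfl fun i _ => by ring
  · exact sum_congr rfl fun p _ => by rw [Prod.fst_swap, Prod.snd_swap, hM.apply p.1 p.2]; ring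

lemma Matrix.dotProduct_mulVec_single_add_single_sub (M : Matrix ι ι ℝ) (i j : ι) :
    (Pi.single i 1 + Pi.single j 1) ⬝ᵥ M *ᵥ (Pi.single i 1 + Pi.single j 1) -
      (Pi.single i 1 - Pi.single j 1) ⬝ᵥ M *ᵥ (Pi.single i 1 - Pi.single j 1) =
      2 * (M i j + M j i) := by
  simp only [mulVec_add, mulVec_sub, add_dotProduct, sub_dotProduct, dotProduct_add,
    dotProduct_sub, mulVec_single_one, single_one_dotProduct, col_apply]
  ring

def pairwiseQuadForm (d : ι → ℝ) (α β γ : ι → ι → ℝ) (x : ι → ℝ) : ℝ :=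
  ∑ i, d i * x i ^ 2 + ∑ p : ι × ι with p.1 < p.2,
    (α p.1 p.2 * x p.1 ^ 2 + β p.1 p.2 * x p.1 * x p.2 + γ p.1 p.2 * x p.2 ^ 2)

lemma pairwiseQuadForm_single_add_single_sub (d : ι → ℝ) (α β γ : ι → ι → ℝ) {i j : ι}
    (hij : i < j) :
    pairwiseQuadForm d α β γ (Pi.single i 1 + Pi.single j 1) -
      pairwiseQuadForm d α β γ (Pi.single i 1 - Pi.single j 1) = 2 * β i j := by
  set u : ι → ℝ := Pi.single i 1 + Pi.single j 1
  set w : ι → ℝ := Pi.single i 1 - Pi.single j 1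
  have hsq : ∀ t, w t ^ 2 = u t ^ 2 := by
    intro t
    have hij_t : (Pi.single i 1 : ι → ℝ) t * (Pi.single j 1 : ι → ℝ) t = 0 := by
      rcases eq_or_ne t i with rfl | ht
      · simp [hij.ne]
      · simp [ht]
    simp only [u, w, Pi.add_apply, Pi.sub_apply]
    linear_combination (-4) * hij_t
  have hcross : ∀ p : ι × ι, p.1 < p.2 → p ≠ (i, j) → w p.1 * w p.2 = u p.1 * u p.2 := by
    rintro ⟨a, b⟩ hab hp
    have hij_ab : (Pi.single i 1 : ι → ℝ) a * (Pi.single j 1 : ι → ℝ) b = 0 := by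
      by_cases ha : a = i
      · simp [show b ≠ j from fun hb => hp (by rw [ha, hb])]
      · simp [ha]
    have hji_ab : (Pi.single j 1 : ι → ℝ) a * (Pi.single i 1 : ι → ℝ) b = 0 := by
      by_cases ha : a = j
      · simp [show b ≠ i by rintro rfl; exact absurd (hij.trans (ha ▸ hab)) (lt_irrefl _)]
      · simp [ha]
    simp only [u, w, Pi.add_apply, Pi.sub_apply]
    linear_combination (-2) * hij_ab - 2 * hji_ab
  have hu : u i * u j = 1 := by simp [u, hij.ne, hij.ne']
  have hw : w i * w j = -1 := by simp [w, hij.ne, hij.ne']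
  unfold pairwiseQuadForm
  simp only [hsq]
  rw [add_sub_add_left_eq_sub, ← sum_sub_distrib, sum_eq_single_of_mem (i, j) (by simp [hij])]
  · linear_combination β i j * (hu - hw)
  · intro p hp hpij
    linear_combination β p.1 p.2 * (hcross p (mem_filter.1 hp).2 hpij).symm

lemma cross_coeff_eq_of_forall_dotProduct_mulVec_eq {M : Matrix ι ι ℝ} {d : ι → ℝ}
    {α β γ : ι → ι → ℝ} (hM : ∀ x, x ⬝ᵥ M *ᵥ x = pairwiseQuadForm d α β γ x) {i j : ι}
    (hij : i < j) : β i j = M i j + M j i := by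
  have h := M.dotProduct_mulVec_single_add_single_sub i j
  rw [hM, hM, pairwiseQuadForm_single_add_single_sub d α β γ hij] at h
  linarith

variable {Γ : Matrix ι ι ℝ} {d : ι → ℝ} {α β γ : ι → ι → ℝ}

lemma dotProduct_mulVec_abs_one_sub_add_le (hsym : Γ.IsSymm) (hdiag : ∀ i, Γ i i = 1)
    (hdec : ∀ x, x ⬝ᵥ Γ *ᵥ x = pairwiseQuadForm d α β γ x)
    (hpsd : ∀ i j, i < j → ∀ u v, 0 ≤ α i j * u ^ 2 + β i j * u * v + γ i j * v ^ 2)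
    {y : ι → ℝ} (hy : 0 ≤ y) :
    y ⬝ᵥ (1 - Γ).map abs *ᵥ y + ∑ i, d i * y i ^ 2 ≤ y ⬝ᵥ y := by
  have hN : ((1 - Γ).map abs).IsSymm := (isSymm_one.sub hsym).map _
  have hNdiag : ∀ i, (1 - Γ).map abs i i = 0 := fun i => by simp [hdiag]
  have hNoff : ∀ i j, i ≠ j → (1 - Γ).map abs i j = |Γ i j| := fun i j hij => by
    simp [one_apply_ne hij]
  have hβ : ∀ p : ι × ι, p.1 < p.2 → β p.1 p.2 = 2 * Γ p.1 p.2 := fun p hp => by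
    rw [cross_coeff_eq_of_forall_dotProduct_mulVec_eq hdec hp, hsym.apply p.1 p.2]; ring
  have hedge : ∀ p ∈ univ.filter fun p : ι × ι => p.1 < p.2,
      2 * ((1 - Γ).map abs p.1 p.2 * y p.1 * y p.2) + 2 * (Γ p.1 p.2 * y p.1 * y p.2) ≤
        α p.1 p.2 * y p.1 ^ 2 + β p.1 p.2 * y p.1 * y p.2 + γ p.1 p.2 * y p.2 ^ 2 := by
    intro p hp
    have hlt := (mem_filter.1 hp).2
    have h := abs_mul_mul_le_of_forall_nonneg (hpsd _ _ hlt) (hy p.1) (hy p.2)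
    rw [hβ p hlt, abs_mul, abs_two] at h
    rw [hNoff _ _ hlt.ne, hβ p hlt]
    linarith
  have hΓ := hsym.dotProduct_mulVec_self y
  rw [hdec, pairwiseQuadForm] at hΓ
  have hsum := sum_le_sum hedge
  rw [sum_add_distrib, ← mul_sum, ← mul_sum] at hsum
  rw [hN.dotProduct_mulVec_self y]
  simp only [hdiag, hNdiag, zero_mul, one_mul, sum_const_zero, zero_add] at hΓ ⊢
  have hyy : y ⬝ᵥ y = ∑ i, y i ^ 2 := by simp [dotProduct, sq]
  linarith

lemma abs_dotProduct_mulVec_abs_one_sub_lt (hsym : Γ.IsSymm) (hdiag : ∀ i, Γ i i = 1)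
    (hd : ∀ i, 0 < d i) (hdec : ∀ x, x ⬝ᵥ Γ *ᵥ x = pairwiseQuadForm d α β γ x)
    (hpsd : ∀ i j, i < j → ∀ u v, 0 ≤ α i j * u ^ 2 + β i j * u * v + γ i j * v ^ 2)
    {z : ι → ℝ} (hz : z ≠ 0) :
    |z ⬝ᵥ (1 - Γ).map abs *ᵥ z| < z ⬝ᵥ z := by
  obtain ⟨i, hi⟩ := Function.ne_iff.1 hz
  have hpos : 0 < ∑ i, d i * |z| i ^ 2 :=
    sum_pos' (fun j _ => mul_nonneg (hd j).le (sq_nonneg _))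
      ⟨i, mem_univ i, mul_pos (hd i) (pow_pos (abs_pos.2 hi) 2)⟩
  calc |z ⬝ᵥ (1 - Γ).map abs *ᵥ z|
      ≤ |z| ⬝ᵥ (1 - Γ).map abs *ᵥ |z| := abs_dotProduct_mulVec_le (fun _ _ => abs_nonneg _) z
    _ < |z| ⬝ᵥ (1 - Γ).map abs *ᵥ |z| + ∑ i, d i * |z| i ^ 2 := lt_add_of_pos_right _ hpos
    _ ≤ |z| ⬝ᵥ |z| := dotProduct_mulVec_abs_one_sub_add_le hsym hdiag hdec hpsd (abs_nonneg z)
    _ = z ⬝ᵥ z := by simp [dotProduct, abs_mul_abs_self]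

end PairwiseQuadForm

lemma pos_of_strictConvexOn_quadratic {a b c : ℝ}
    (h : StrictConvexOn ℝ Set.univ fun x : ℝ => a * x ^ 2 + b * x + c) : 0 < a := by
  have := h.2 (Set.mem_univ 1) (Set.mem_univ (-1)) (by norm_num) (by norm_num : (0 : ℝ) < 1 / 2)
    (by norm_num : (0 : ℝ) < 1 / 2) (by norm_num)
  norm_num at this
  linarith

lemma binary_quadratic_nonneg_of_convexOn {a b c d e k : ℝ}
    (h : ConvexOn ℝ Set.univ fun p : ℝ × ℝ =>
      a * p.1 ^ 2 + b * p.1 * p.2 + c * p.2 ^ 2 + d * p.1 + e * p.2 + k) (u v : ℝ) :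
    0 ≤ a * u ^ 2 + b * u * v + c * v ^ 2 := by
  have := h.2 (Set.mem_univ (u, v)) (Set.mem_univ (-u, -v)) (by norm_num : (0 : ℝ) ≤ 1 / 2)
    (by norm_num : (0 : ℝ) ≤ 1 / 2) (by norm_num)
  norm_num at this
  nlinarith [this]

lemma quadObj_add_quadObj_neg_sub {n : ℕ} (Γ : Matrix (Fin n) (Fin n) ℝ) (h x : Fin n → ℝ) :
    quadObj Γ h x + quadObj Γ h (-x) - 2 * quadObj Γ h 0 = x ⬝ᵥ Γ *ᵥ x := by
  simp [quadObj, mulVec_neg]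
  ring

lemma ConvexDecomposable.exists_pairwiseQuadForm {n : ℕ} {Γ : Matrix (Fin n) (Fin n) ℝ}
    {h : Fin n → ℝ} (hcd : ConvexDecomposable Γ h) :
    ∃ (d : Fin n → ℝ) (α β γ : Fin n → Fin n → ℝ), (∀ i, 0 < d i) ∧
      (∀ i j, i < j → ∀ u v, 0 ≤ α i j * u ^ 2 + β i j * u * v + γ i j * v ^ 2) ∧
      ∀ x, x ⬝ᵥ Γ *ᵥ x = pairwiseQuadForm d α β γ x := by
  obtain ⟨Fi, Fij, hFi, hFij, hsum⟩ := hcd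
  choose a b c hquad using fun i => (hFi i).1
  choose! α β γ d e k hpair using fun i j (hij : Adj Γ i j) => (hFij i j hij).1
  have ha : ∀ i, 0 < a i := fun i =>
    pos_of_strictConvexOn_quadratic (b := b i) (c := c i) (funext (hquad i) ▸ (hFi i).2)
  have hpsd : ∀ i j, Adj Γ i j → ∀ u v, 0 ≤ α i j * u ^ 2 + β i j * u * v + γ i j * v ^ 2 :=
    fun i j hij => binary_quadratic_nonneg_of_convexOn (d := d i j) (e := e i j) (k := k i j)
      (by simpa only [hpair i j hij] using (hFij i j hij).2)
  refine ⟨fun i => 2 * a i, fun i j => if Adj Γ i j then 2 * α i j else 0,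
    fun i j => if Adj Γ i j then 2 * β i j else 0, fun i j => if Adj Γ i j then 2 * γ i j else 0,
    fun i => mul_pos two_pos (ha i), fun i j _ u v => ?_, fun x => ?_⟩
  · dsimp only
    split_ifs with hij
    · linarith [hpsd i j hij u v]
    · simp
  · have hsingle : ∑ i, (Fi i (x i) + Fi i (-x i) - 2 * Fi i 0) = ∑ i, 2 * a i * x i ^ 2 :=
      sum_congr rfl fun i _ => by simp only [hquad]; ring
    have hpairs : ∑ p : Fin n × Fin n with Adj Γ p.1 p.2 ∧ p.1 < p.2,
        (Fij p.1 p.2 (x p.1) (x p.2) + Fij p.1 p.2 (-x p.1) (-x p.2) - 2 * Fij p.1 p.2 0 0) =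
        ∑ p : Fin n × Fin n with p.1 < p.2,
          ((if Adj Γ p.1 p.2 then 2 * α p.1 p.2 else 0) * x p.1 ^ 2 +
            (if Adj Γ p.1 p.2 then 2 * β p.1 p.2 else 0) * x p.1 * x p.2 +
            (if Adj Γ p.1 p.2 then 2 * γ p.1 p.2 else 0) * x p.2 ^ 2) := by
      rw [sum_filter, sum_filter]
      refine sum_congr rfl fun p _ => ?_
      by_cases hA : Adj Γ p.1 p.2 <;> by_cases hlt : p.1 < p.2 <;> simp only [hA, hlt, hpair,
        and_true, and_false, if_true, if_false] <;> ring
    rw [sum_sub_distrib, sum_add_distrib, ← mul_sum] at hsingle hpairs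
    rw [← quadObj_add_quadObj_neg_sub Γ h x, hsum, hsum, hsum, pairwiseQuadForm]
    simp only [Pi.neg_apply, Pi.zero_apply]
    linarith

theorem stmt11_general {n : ℕ} (Γ : Matrix (Fin n) (Fin n) ℝ) (hsym : Γ.IsSymm)
    (hdiag : ∀ i, Γ i i = 1) (h : Fin n → ℝ)
    (hcd : ConvexDecomposable Γ h) :
    spectralRadius ℂ (((1 - Γ).map (fun a => |a|)).map (Complex.ofReal)) < 1 := by
  obtain ⟨d, α, β, γ, hd, hpsd, hdec⟩ := hcd.exists_pairwiseQuadForm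
  have hN : ((1 - Γ).map fun a => |a|).IsHermitian :=
    isHermitian_iff_isSymm.2 ((isSymm_one.sub hsym).map _)
  exact hN.spectralRadius_map_ofReal_lt_one fun z hz =>
    abs_dotProduct_mulVec_abs_one_sub_lt hsym hdiag hd hdec hpsd hz

/-- Existence of a convex decomposition of `f` implies walk-summability of `Γ`:
the spectral radius of `|I − Γ|` is less than 1. -/
theorem stmt11 {n : ℕ} (Γ : Matrix (Fin n) (Fin n) ℝ) (hsym : Γ.IsSymm)
    (hdiag : ∀ i, Γ i i = 1) (hpd : Γ.PosDef) (h : Fin n → ℝ)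
    (hcd : ConvexDecomposable Γ h) :
    spectralRadius ℂ (((1 - Γ).map (fun a => |a|)).map (Complex.ofReal)) < 1 :=
  stmt11_general Γ hsym hdiag h hcd
end
end

section
/- If f is convex decomposable, then in the infinite computation tree rooted at r, the total weight ρ of the set of self-returning walks from a vertex ĩ (with label i) to itself that never cross the edge (ĩ, j̃) equals γ*_{ij}. -/
open Classical Finset Matrix Filter

noncomputable section

/-- A walk is non-backtracking if `w_{k} ≠ w_{k+2}` for all `k`. -/
def NonBT {n : ℕ} (l : List (Fin n)) : Prop :=
  ∀ (k : ℕ) (h : k + 2 < l.length), l.get ⟨k, by omega⟩ ≠ l.get ⟨k + 2, h⟩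

/-- A vertex of the infinite computation tree rooted at `r`: a (finite) non-backtracking
path in the graph starting at `r`.  Its label is its last vertex. -/
def TVert {n : ℕ} (Γ : Matrix (Fin n) (Fin n) ℝ) (r : Fin n) : Type :=
  {l : List (Fin n) // l ≠ [] ∧ l.head? = some r ∧ l.Chain' (Adj Γ) ∧ NonBT l}

/-- The label in the original graph of a computation tree vertex. -/
def tlabel {n : ℕ} {Γ : Matrix (Fin n) (Fin n) ℝ} {r : Fin n} (v : TVert Γ r) :
    Fin n :=
  v.val.getLast v.prop.1

/-- Adjacency in the computation tree: one path extends the other by one vertex. -/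
def TAdj {n : ℕ} {Γ : Matrix (Fin n) (Fin n) ℝ} {r : Fin n} (v w : TVert Γ r) : Prop :=
  (∃ a, w.val = v.val ++ [a]) ∨ (∃ a, v.val = w.val ++ [a])

/-- The weight `ρ` of a walk on the computation tree: the product of the entries of
`R = I − Γ` between the labels of consecutive tree vertices. -/
def treeW {n : ℕ} {r : Fin n} (Γ : Matrix (Fin n) (Fin n) ℝ)
    (L : List (TVert Γ r)) : ℝ :=
  ((L.zip L.tail).map (fun p => (1 - Γ) (tlabel p.1) (tlabel p.2))).prod

/-- The set of self-returning walks on the computation tree from `ĩ` back to `ĩ`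
that never cross the tree edge `(ĩ, j̃)`. -/
def SelfRet {n : ℕ} {Γ : Matrix (Fin n) (Fin n) ℝ} {r : Fin n}
    (iv jv : TVert Γ r) : Set (List (TVert Γ r)) :=
  {L | L ≠ [] ∧ L.Chain' TAdj ∧ L.head? = some iv ∧ L.getLast? = some iv ∧
    ∀ p ∈ L.zip L.tail, ¬((p.1 = iv ∧ p.2 = jv) ∨ (p.1 = jv ∧ p.2 = iv))}


/-!
A self-returning walk at `ĩ` other than `[ĩ]` splits uniquely at its first return to `ĩ`: a
step to a tree neighbour `ũ ≠ j̃`, a self-returning walk at `ũ` avoiding the edge `(ũ, ĩ)`, the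
step back to `ĩ` (the two steps weigh `Γᵤᵢ²`), and a self-returning walk at `ĩ` avoiding
`(ĩ, j̃)`. Since the computation tree is a tree, `ũ` is determined by its label
`u ∈ N(i) \ {j}`.

Bounding finite partial sums by induction on the length of the walks, with the vector `v` of a
convex decomposition, gives `Σ |ρ(w)| ≤ Fᵢⱼ(v) = 1 / (1 - Σᵤ Γᵤᵢ² vᵤᵢ) < vᵢⱼ`. So all the
series converge absolutely, and the decomposition yields `ρ(ĩ,j̃) (1 - Σᵤ Γᵤᵢ² ρ(ũ,ĩ)) = 1`,
the fixed-point equation of `γ*` but indexed by tree edges. Comparing the two equations,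
`|ρ - γ*|` measured in units of `v - γ*` shrinks by the factor
`θ = max (Fᵢⱼ(v) - γ*ᵢⱼ) / (vᵢⱼ - γ*ᵢⱼ) < 1` at every level, hence vanishes.
-/

variable {n : ℕ} {Γ : Matrix (Fin n) (Fin n) ℝ} {r : Fin n}

lemma List.isChain_iff_forall_mem_zip_tail {α : Type*} {R : α → α → Prop} :
    ∀ {l : List α}, l.IsChain R ↔ ∀ p ∈ l.zip l.tail, R p.1 p.2
  | [] => by simp
  | [_] => by simp
  | a :: b :: l => by
    rw [List.isChain_cons_cons, List.isChain_iff_forall_mem_zip_tail]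
    simp [List.zip_cons_cons]

lemma Adj.symm (hsym : Γ.IsSymm) {i j : Fin n} (h : Adj Γ i j) : Adj Γ j i :=
  ⟨h.1.symm, hsym.apply i j ▸ h.2⟩

lemma TAdj.symm {a b : TVert Γ r} (h : TAdj a b) : TAdj b a := h.elim Or.inr Or.inl

lemma TAdj.ne {a b : TVert Γ r} (h : TAdj a b) : a ≠ b := by
  rintro rfl
  rcases h with ⟨x, hx⟩ | ⟨x, hx⟩ <;> simpa using congrArg List.length hx

lemma tlabel_eq_of_val_eq {a : TVert Γ r} {l : List (Fin n)} {x : Fin n}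
    (h : a.val = l ++ [x]) : tlabel a = x := by
  simp only [tlabel, h, List.getLast_append_singleton]

lemma adj_tlabel_of_val_eq {a b : TVert Γ r} {x : Fin n} (h : b.val = a.val ++ [x]) :
    Adj Γ (tlabel a) (tlabel b) := by
  have hc : (a.val ++ [x]).IsChain (Adj Γ) := h ▸ b.prop.2.2.1
  rw [tlabel_eq_of_val_eq h]
  exact (List.isChain_append.mp hc).2.2 _ (List.getLast?_eq_some_getLast a.prop.1) _ rfl

lemma TAdj.adj_tlabel (hsym : Γ.IsSymm) {a b : TVert Γ r} (h : TAdj a b) :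
    Adj Γ (tlabel a) (tlabel b) := by
  rcases h with ⟨x, hx⟩ | ⟨x, hx⟩
  · exact adj_tlabel_of_val_eq hx
  · exact (adj_tlabel_of_val_eq hx).symm hsym

def TAdjAvoid (x y u w : TVert Γ r) : Prop :=
  TAdj u w ∧ ¬((u = x ∧ w = y) ∨ (u = y ∧ w = x))

lemma tAdjAvoid_comm (x y : TVert Γ r) : TAdjAvoid x y = TAdjAvoid y x := by
  ext u w
  simp only [TAdjAvoid]
  tauto

set_option linter.deprecated false in
lemma mem_selfRet_iff {x y : TVert Γ r} {L : List (TVert Γ r)} :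
    L ∈ SelfRet x y ↔ L ≠ [] ∧ L.IsChain (TAdjAvoid x y) ∧ L.head? = some x ∧
      L.getLast? = some x := by
  simp only [SelfRet, Set.mem_setOf_eq, List.Chain', List.isChain_iff_forall_mem_zip_tail,
    TAdjAvoid, imp_and, forall_and]
  tauto

/-- `c.val <+: u.val` says that `u` lies in the subtree below `c`, which can only be entered
or left through the edge between `c` and its parent `p`. -/
lemma TAdjAvoid.prefix_iff {p c u w : TVert Γ r} {d : Fin n} (hpc : c.val = p.val ++ [d])
    (h : TAdjAvoid p c u w) : c.val <+: u.val ↔ c.val <+: w.val := by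
  suffices key : ∀ {u w : TVert Γ r} {e : Fin n}, w.val = u.val ++ [e] →
      ¬(u = p ∧ w = c) → (c.val <+: u.val ↔ c.val <+: w.val) by
    rcases h with ⟨⟨e, he⟩ | ⟨e, he⟩, hne⟩
    · exact key he (fun h' => hne (Or.inl h'))
    · exact (key he (fun h' => hne (Or.inr h'.symm))).symm
  intro u w e he hne
  rw [he, List.prefix_concat_iff]
  refine ⟨Or.inr, fun h' => h'.resolve_left fun hce => hne ⟨?_, ?_⟩⟩
  · exact Subtype.ext (List.append_inj_left' (hpc.symm.trans hce) rfl).symm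
  · exact Subtype.ext (he.trans hce.symm)

lemma ne_and_eq_of_mem_of_isChain {x y : TVert Γ r} (hxy : TAdj x y) {L : List (TVert Γ r)}
    (hL : L.IsChain (TAdjAvoid x y)) (hx : L.head? = some x) {z : TVert Γ r} (hz : z ∈ L) :
    z ≠ y ∧ (TAdj z y → z = x) := by
  have hstart : ∀ (P : TVert Γ r → Prop), P x → ∀ hL : L ≠ [], P (L.head hL) := by
    intro P hP hne
    rwa [(List.head_eq_iff_head?_eq_some hne).mpr hx]
  rcases hxy with ⟨d, hd⟩ | ⟨d, hd⟩
  · have hout : ¬ y.val <+: z.val := by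
      refine hL.induction (fun z => ¬ y.val <+: z.val) L ?_
        (hstart (fun z => ¬ y.val <+: z.val) ?_) z hz
      · exact fun u w h => mt ((h.prefix_iff hd).2)
      · exact fun h => by simpa [hd] using h.length_le
    refine ⟨fun h => hout (h ▸ List.prefix_refl _), ?_⟩
    rintro (⟨e, he⟩ | ⟨e, he⟩)
    · exact Subtype.ext (List.append_inj_left' (he.symm.trans hd) rfl)
    · exact absurd (he ▸ List.prefix_append _ _) hout
  · have hin : x.val <+: z.val := by
      rw [tAdjAvoid_comm] at hL
      refine hL.induction (fun z => x.val <+: z.val) L ?_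
        (hstart (fun z => x.val <+: z.val) (List.prefix_refl _)) z hz
      exact fun u w h => (h.prefix_iff hd).1
    have hlen := hin.length_le
    refine ⟨fun h => by simp [h, hd] at hlen, ?_⟩
    rintro (⟨e, he⟩ | ⟨e, he⟩)
    · simp [hd, he] at hlen
    · exact Subtype.ext (hin.eq_of_length (by simp [he, hd])).symm

lemma nonBT_concat_iff {l : List (Fin n)} {u : Fin n} :
    NonBT (l ++ [u]) ↔ NonBT l ∧ l.dropLast.getLast? ≠ some u := by
  simp only [NonBT, List.get_eq_getElem, List.length_append, List.length_singleton,
    List.getLast?_dropLast]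
  constructor
  · intro h
    refine ⟨fun k hk => ?_, ?_⟩
    · have := h k (by omega)
      rwa [List.getElem_append_left (by omega), List.getElem_append_left hk] at this
    split_ifs with hl
    · simp
    · have := h (l.length - 2) (by omega)
      rw [List.getElem_append_left (by omega), List.getElem_append_right (by omega)] at this
      simpa [List.getElem?_eq_getElem (show l.length - 2 < l.length by omega),
        show l.length - 2 + 2 - l.length = 0 by omega] using this
  · rintro ⟨h, hu⟩ k hk
    rw [List.getElem_append_left (by omega)]
    by_cases hk' : k + 2 < l.length
    · rw [List.getElem_append_left hk']
      exact h k hk'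
    · rw [List.getElem_append_right (by omega)]
      rw [if_neg (by omega), List.getElem?_eq_getElem (by omega)] at hu
      simpa [show k = l.length - 2 by omega, show l.length - 2 + 2 - l.length = 0 by omega]
        using hu

lemma NonBT.dropLast {l : List (Fin n)} (h : NonBT l) : NonBT l.dropLast := by
  rcases eq_or_ne l [] with rfl | hl
  · exact h
  · rw [← List.dropLast_append_getLast hl, nonBT_concat_iff] at h
    exact h.1

def TVert.child (a : TVert Γ r) (u : Fin n) (hu : Adj Γ (tlabel a) u)
    (hnb : a.val.dropLast.getLast? ≠ some u) : TVert Γ r :=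
  ⟨a.val ++ [u], by simp, by rw [List.head?_append_of_ne_nil _ a.prop.1]; exact a.prop.2.1,
    List.isChain_append.mpr ⟨a.prop.2.2.1, List.isChain_singleton _, by
      simpa [tlabel, List.getLast?_eq_some_getLast a.prop.1] using hu⟩,
    nonBT_concat_iff.mpr ⟨a.prop.2.2.2, hnb⟩⟩

def TVert.parent (a : TVert Γ r) (ha : a.val.dropLast ≠ []) : TVert Γ r :=
  ⟨a.val.dropLast, ha, by
    rw [List.head?_dropLast, if_pos]
    · exact a.prop.2.1
    · have := List.length_pos_iff.mpr ha
      simp only [List.length_dropLast] at this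
      omega,
    a.prop.2.2.1.prefix (List.dropLast_prefix _), a.prop.2.2.2.dropLast⟩

lemma exists_tAdj_tlabel_eq {a : TVert Γ r} {u : Fin n} (hu : Adj Γ (tlabel a) u) :
    ∃ w, TAdj a w ∧ tlabel w = u := by
  by_cases hp : a.val.dropLast.getLast? = some u
  · obtain ⟨ys, hys⟩ := List.getLast?_eq_some_iff.mp hp
    have hne : a.val.dropLast ≠ [] := by simp [hys]
    exact ⟨a.parent hne, Or.inr ⟨_, (List.dropLast_append_getLast a.prop.1).symm⟩,
      tlabel_eq_of_val_eq hys⟩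
  · exact ⟨a.child u hu hp, Or.inl ⟨u, rfl⟩, tlabel_eq_of_val_eq rfl⟩

/-- `w` is a child and `w'` the parent of `a`: non-backtracking separates their labels. -/
lemma tlabel_ne_of_val_eq_append {a w w' : TVert Γ r} {x x' : Fin n}
    (hw : w.val = a.val ++ [x]) (hw' : a.val = w'.val ++ [x']) : tlabel w ≠ tlabel w' := by
  have hnb := w.prop.2.2.2
  rw [hw, hw', nonBT_concat_iff, List.dropLast_concat,
    List.getLast?_eq_some_getLast w'.prop.1] at hnb
  rw [tlabel_eq_of_val_eq hw]
  exact fun h => hnb.2 (by rw [h]; rfl)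

lemma TAdj.eq_of_tlabel_eq {a w w' : TVert Γ r} (hw : TAdj a w) (hw' : TAdj a w')
    (h : tlabel w = tlabel w') : w = w' := by
  rcases hw with ⟨x, hx⟩ | ⟨x, hx⟩ <;> rcases hw' with ⟨x', hx'⟩ | ⟨x', hx'⟩
  · rw [tlabel_eq_of_val_eq hx, tlabel_eq_of_val_eq hx'] at h
    exact Subtype.ext (by rw [hx, hx', h])
  · exact absurd h (tlabel_ne_of_val_eq_append hx hx')
  · exact absurd h.symm (tlabel_ne_of_val_eq_append hx' hx)
  · exact Subtype.ext (List.append_inj_left' (hx.symm.trans hx') rfl)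

def nbrsExcept (Γ : Matrix (Fin n) (Fin n) ℝ) (i j : Fin n) : Finset (Fin n) :=
  Finset.univ.filter (fun u => Adj Γ u i ∧ u ≠ j)

lemma ssum_eq_sum_nbrsExcept (γ : Fin n → Fin n → ℝ) (i j : Fin n) :
    Ssum Γ γ i j = ∑ u ∈ nbrsExcept Γ i j, Γ u i ^ 2 * γ u i := rfl

lemma tlabel_mem_nbrsExcept (hsym : Γ.IsSymm) {a b x : TVert Γ r} (hab : TAdj a b)
    (hax : TAdj a x) (hxb : x ≠ b) : tlabel x ∈ nbrsExcept Γ (tlabel a) (tlabel b) := by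
  simp only [nbrsExcept, Finset.mem_filter, Finset.mem_univ, true_and]
  exact ⟨(hax.adj_tlabel hsym).symm hsym, fun h => hxb (hax.eq_of_tlabel_eq hab h)⟩

/-- The tree neighbour of `a` other than `b` with label `u` (junk value `a` if there is none). -/
def treeNbr (a b : TVert Γ r) (u : Fin n) : TVert Γ r :=
  if h : ∃ w, TAdj a w ∧ w ≠ b ∧ tlabel w = u then h.choose else a

lemma treeNbr_spec (hsym : Γ.IsSymm) {a b : TVert Γ r} {u : Fin n}
    (hu : u ∈ nbrsExcept Γ (tlabel a) (tlabel b)) :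
    TAdj a (treeNbr a b u) ∧ treeNbr a b u ≠ b ∧ tlabel (treeNbr a b u) = u := by
  simp only [nbrsExcept, Finset.mem_filter, Finset.mem_univ, true_and] at hu
  have h : ∃ w, TAdj a w ∧ w ≠ b ∧ tlabel w = u := by
    obtain ⟨w, haw, hw⟩ := exists_tAdj_tlabel_eq (hu.1.symm hsym)
    exact ⟨w, haw, fun hwb => hu.2 (hwb ▸ hw).symm, hw⟩
  rw [treeNbr, dif_pos h]
  exact h.choose_spec

lemma eq_treeNbr (hsym : Γ.IsSymm) {a b x : TVert Γ r} (hab : TAdj a b) (hax : TAdj a x)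
    (hxb : x ≠ b) : x = treeNbr a b (tlabel x) := by
  have := treeNbr_spec hsym (tlabel_mem_nbrsExcept hsym hab hax hxb)
  exact hax.eq_of_tlabel_eq this.1 this.2.2.symm

lemma treeW_singleton (a : TVert Γ r) : treeW Γ [a] = 1 := rfl

lemma treeW_cons {l : List (TVert Γ r)} (a : TVert Γ r) (hl : l ≠ []) :
    treeW Γ (a :: l) = (1 - Γ) (tlabel a) (tlabel (l.head hl)) * treeW Γ l := by
  obtain ⟨b, t, rfl⟩ := List.exists_cons_of_ne_nil hl
  simp [treeW]

lemma treeW_append {p q : List (TVert Γ r)} (hp : p ≠ []) (hq : q ≠ []) :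
    treeW Γ (p ++ q) =
      treeW Γ p * (1 - Γ) (tlabel (p.getLast hp)) (tlabel (q.head hq)) * treeW Γ q := by
  induction p with
  | nil => exact absurd rfl hp
  | cons a t ih =>
    rcases eq_or_ne t [] with rfl | ht
    · simp [treeW_cons a hq, treeW_singleton]
    · rw [List.cons_append, treeW_cons a (by simp [ht]), ih ht, treeW_cons a ht,
        List.head_append_of_ne_nil ht, List.getLast_cons ht]
      ring

lemma head_eq_of_mem_selfRet {x y : TVert Γ r} {L : List (TVert Γ r)} (hL : L ∈ SelfRet x y) :
    L.head hL.1 = x :=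
  (List.head_eq_iff_head?_eq_some _).mpr hL.2.2.1

lemma getLast_eq_of_mem_selfRet {x y : TVert Γ r} {L : List (TVert Γ r)}
    (hL : L ∈ SelfRet x y) : L.getLast hL.1 = x := by
  simpa [List.getLast?_eq_some_getLast hL.1] using hL.2.2.2.1

lemma singleton_mem_selfRet (a b : TVert Γ r) : [a] ∈ SelfRet a b :=
  mem_selfRet_iff.mpr ⟨by simp, List.isChain_singleton _, rfl, rfl⟩

lemma notMem_of_mem_selfRet {x y : TVert Γ r} {L : List (TVert Γ r)} (hxy : TAdj x y)
    (hL : L ∈ SelfRet x y) : y ∉ L :=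
  have hL' := mem_selfRet_iff.mp hL
  fun hy => (ne_and_eq_of_mem_of_isChain hxy hL'.2.1 hL'.2.2.1 hy).1 rfl

lemma cons_append_mem_selfRet {a b x : TVert Γ r} {p q : List (TVert Γ r)} (hab : TAdj a b)
    (hax : TAdj a x) (hxb : x ≠ b) (hp : p ∈ SelfRet x a) (hq : q ∈ SelfRet a b) :
    a :: (p ++ q) ∈ SelfRet a b := by
  have hap := notMem_of_mem_selfRet hax.symm hp
  obtain ⟨hpne, hpc, hph, hpl⟩ := mem_selfRet_iff.mp hp
  obtain ⟨hqne, hqc, hqh, hql⟩ := mem_selfRet_iff.mp hq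
  refine mem_selfRet_iff.mpr ⟨by simp, List.isChain_cons.mpr ⟨?_, ?_⟩, rfl, ?_⟩
  · intro y hy
    rw [List.head?_append_of_ne_nil _ hpne, hph, Option.mem_def, Option.some.injEq] at hy
    subst hy
    exact ⟨hax, by rintro (⟨-, rfl⟩ | ⟨rfl, -⟩); exacts [hxb rfl, hab.ne rfl]⟩
  · refine List.isChain_append.mpr ⟨hpc.imp_of_mem_imp ?_, hqc, ?_⟩
    · rintro u w hu hw ⟨h, -⟩
      exact ⟨h, by rintro (⟨rfl, -⟩ | ⟨-, rfl⟩) <;> contradiction⟩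
    · simp only [hpl, hqh, Option.mem_def, Option.some.injEq]
      rintro _ rfl _ rfl
      exact ⟨hax.symm, by rintro (⟨-, rfl⟩ | ⟨rfl, -⟩); exacts [hab.ne rfl, hxb rfl]⟩
  · rw [← List.cons_append, List.getLast?_append, hql]
    rfl

lemma treeW_cons_append (hsym : Γ.IsSymm) {a x y : TVert Γ r} {p q : List (TVert Γ r)}
    (hax : TAdj a x) (hp : p ∈ SelfRet x a) (hq : q ∈ SelfRet a y) :
    treeW Γ (a :: (p ++ q)) = Γ (tlabel x) (tlabel a) ^ 2 * (treeW Γ p * treeW Γ q) := by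
  have hxa := (hax.adj_tlabel hsym).1
  rw [← List.singleton_append, treeW_append (by simp) (by simp [hp.1]),
    treeW_append hp.1 hq.1, List.head_append_of_ne_nil hp.1, head_eq_of_mem_selfRet hp,
    getLast_eq_of_mem_selfRet hp, head_eq_of_mem_selfRet hq]
  simp [Matrix.sub_apply, Matrix.one_apply_ne hxa, Matrix.one_apply_ne hxa.symm, treeW_singleton,
    hsym.apply (tlabel a) (tlabel x)]
  ring

def excursion (a : TVert Γ r) (L : List (TVert Γ r)) : List (TVert Γ r) :=
  L.tail.takeWhile fun z => decide (z ≠ a)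

def afterExcursion (a : TVert Γ r) (L : List (TVert Γ r)) : List (TVert Γ r) :=
  L.tail.dropWhile fun z => decide (z ≠ a)

lemma cons_excursion_append {a : TVert Γ r} {L : List (TVert Γ r)} (h : L.head? = some a) :
    a :: (excursion a L ++ afterExcursion a L) = L := by
  obtain ⟨t, rfl⟩ := List.head?_eq_some_iff.mp h
  rw [excursion, afterExcursion, List.takeWhile_append_dropWhile, List.tail_cons]

lemma notMem_excursion (a : TVert Γ r) (L : List (TVert Γ r)) : a ∉ excursion a L :=
  fun h => by simpa using List.mem_takeWhile_imp h

lemma head?_afterExcursion {a : TVert Γ r} {L : List (TVert Γ r)} (h : a ∈ L.tail) :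
    (afterExcursion a L).head? = some a := by
  have hne : afterExcursion a L ≠ [] := by
    rw [afterExcursion, ne_eq, List.dropWhile_eq_nil_iff]
    exact fun h' => by simpa using h' a h
  have := List.head_dropWhile_not (fun z => decide (z ≠ a)) hne
  rw [decide_eq_false_iff_not, not_not] at this
  rw [List.head?_eq_some_head hne]
  exact congrArg some this

lemma excursion_cons_append {a : TVert Γ r} {p q : List (TVert Γ r)} (hp : a ∉ p)
    (hq : q.head? = some a) :
    excursion a (a :: (p ++ q)) = p ∧ afterExcursion a (a :: (p ++ q)) = q := by
  obtain ⟨q, rfl⟩ := List.head?_eq_some_iff.mp hq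
  have hpos : ∀ z ∈ p, decide (z ≠ a) = true := fun z hz =>
    decide_eq_true fun h => hp (h ▸ hz)
  rw [excursion, afterExcursion, List.tail_cons, List.takeWhile_append_of_pos hpos,
    List.takeWhile_cons_of_neg (by simp), List.append_nil, List.dropWhile_append_of_pos hpos,
    List.dropWhile_cons_of_neg (by simp)]
  exact ⟨rfl, rfl⟩

lemma exists_excursion_mem_selfRet {a b : TVert Γ r} {L : List (TVert Γ r)}
    (hL : L ∈ SelfRet a b) (hne : L ≠ [a]) :
    ∃ x, TAdj a x ∧ x ≠ b ∧ excursion a L ∈ SelfRet x a ∧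
      afterExcursion a L ∈ SelfRet a b := by
  obtain ⟨-, hc, hh, hl⟩ := mem_selfRet_iff.mp hL
  have hat : a ∈ L.tail := by
    obtain ⟨t, rfl⟩ := List.head?_eq_some_iff.mp hh
    have ht : t ≠ [] := by rintro rfl; exact hne rfl
    rw [List.getLast?_eq_some_getLast (by simp), List.getLast_cons ht, Option.some.injEq] at hl
    exact hl ▸ List.getLast_mem ht
  have hqh := head?_afterExcursion hat
  have hpq := cons_excursion_append hh
  have hap := notMem_excursion a L
  generalize excursion a L = p, afterExcursion a L = q at hpq hap hqh ⊢
  subst hpq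
  obtain ⟨hx0, hct⟩ := List.isChain_cons.mp hc
  have hpne : p ≠ [] := by
    rintro rfl
    exact (hx0 a (by simpa using hqh)).1.ne rfl
  obtain ⟨x, hph⟩ : ∃ x, p.head? = some x := ⟨_, List.head?_eq_some_head hpne⟩
  have hx : TAdjAvoid a b a x := hx0 x (by rw [List.head?_append_of_ne_nil _ hpne]; exact hph)
  obtain ⟨hpc, hqc, hpq⟩ := List.isChain_append.mp hct
  have hpc' : p.IsChain (TAdjAvoid x a) := hpc.imp_of_mem_imp fun u w hu hw h =>
    ⟨h.1, by rintro (⟨-, rfl⟩ | ⟨rfl, -⟩) <;> contradiction⟩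
  have hpl : p.getLast? = some x := by
    have hlast := List.getLast?_eq_some_getLast hpne
    have hadj : TAdj (p.getLast hpne) a := (hpq _ hlast _ hqh).1
    rw [hlast, (ne_and_eq_of_mem_of_isChain hx.1.symm hpc' hph (List.getLast_mem hpne)).2 hadj]
  have hqne : q ≠ [] := fun h => by simp [h] at hqh
  have hql : q.getLast? = some a := by
    rwa [← List.cons_append, List.getLast?_append, List.getLast?_eq_some_getLast hqne,
      Option.some_or, ← List.getLast?_eq_some_getLast hqne] at hl
  refine ⟨x, hx.1, fun hxb => hx.2 (Or.inl ⟨rfl, hxb⟩), ?_, ?_⟩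
  · exact mem_selfRet_iff.mpr ⟨hpne, hpc', hph, hpl⟩
  · exact mem_selfRet_iff.mpr ⟨hqne, hqc, hqh, hql⟩

lemma fop_mul_one_sub_ssum {γ : Fin n → Fin n → ℝ} {i j : Fin n} (h : 1 - Ssum Γ γ i j ≠ 0) :
    Fop Γ γ i j * (1 - Ssum Γ γ i j) = 1 :=
  one_div_mul_cancel h

namespace ConvVec

variable {v : Fin n → Fin n → ℝ} {i j : Fin n}

lemma ssum_add_lt_one (hsym : Γ.IsSymm) (hv : ConvVec Γ v) (h : Adj Γ i j) :
    Ssum Γ v i j + Γ j i ^ 2 * v j i < 1 := by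
  have hnbrs : nbrs Γ i = insert j (nbrsExcept Γ i j) := by
    ext u
    simp only [nbrs, nbrsExcept, Finset.mem_filter, Finset.mem_insert, Finset.mem_univ,
      true_and]
    by_cases huj : u = j
    · simp [huj, h.symm hsym]
    · simp [huj]
  have := hv.2.2 i
  rwa [hnbrs, Finset.sum_insert (by simp [nbrsExcept]), add_comm] at this

lemma ssum_nonneg (hv : ConvVec Γ v) (i j : Fin n) : 0 ≤ Ssum Γ v i j :=
  Finset.sum_nonneg fun u hu => mul_nonneg (sq_nonneg _) (hv.1 u i (Finset.mem_filter.mp hu).2.1).le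

lemma one_sub_ssum_pos (hsym : Γ.IsSymm) (hv : ConvVec Γ v) (h : Adj Γ i j) :
    0 < 1 - Ssum Γ v i j := by
  have := hv.ssum_add_lt_one hsym h
  have := mul_pos (sq_pos_of_ne_zero (h.symm hsym).2) (hv.1 j i (h.symm hsym))
  linarith

lemma one_le_fop (hsym : Γ.IsSymm) (hv : ConvVec Γ v) (h : Adj Γ i j) : 1 ≤ Fop Γ v i j := by
  rw [Fop, le_div_iff₀ (hv.one_sub_ssum_pos hsym h)]
  linarith [hv.ssum_nonneg i j]

lemma fop_lt (hsym : Γ.IsSymm) (hv : ConvVec Γ v) (h : Adj Γ i j) : Fop Γ v i j < v i j := by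
  have hji := h.symm hsym
  have hpos : 0 < Γ j i ^ 2 * v j i := mul_pos (sq_pos_of_ne_zero hji.2) (hv.1 j i hji)
  calc Fop Γ v i j < 1 / (Γ j i ^ 2 * v j i) :=
        one_div_lt_one_div_of_lt hpos (by linarith [hv.ssum_add_lt_one hsym h])
    _ ≤ v i j := by
        have := hv.2.1 i j h
        rw [← hsym.apply i j] at this
        rw [div_le_iff₀ hpos]
        linarith

end ConvVec

lemma sum_mul_le_sum_image_mul_sum_image {α β γ : Type*} [DecidableEq β] [DecidableEq γ]
    {s : Finset α} {φ : α → β} {ψ : α → γ} {f : β → ℝ} {g : γ → ℝ} (hf : ∀ y, 0 ≤ f y)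
    (hg : ∀ z, 0 ≤ g z) (hinj : Set.InjOn (fun x => (φ x, ψ x)) s) :
    ∑ x ∈ s, f (φ x) * g (ψ x) ≤ (∑ y ∈ s.image φ, f y) * ∑ z ∈ s.image ψ, g z := by
  rw [← Finset.sum_image (f := fun yz : β × γ => f yz.1 * g yz.2) hinj, Finset.sum_mul_sum,
    ← Finset.sum_product (f := fun yz : β × γ => f yz.1 * g yz.2)]
  refine Finset.sum_le_sum_of_subset_of_nonneg ?_ fun _ _ _ => mul_nonneg (hf _) (hg _)
  intro yz hyz
  obtain ⟨x, hx, rfl⟩ := Finset.mem_image.mp hyz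
  exact Finset.mem_product.mpr ⟨Finset.mem_image_of_mem _ hx, Finset.mem_image_of_mem _ hx⟩

lemma headD_eq_of_mem_selfRet {x y d : TVert Γ r} {L : List (TVert Γ r)}
    (hL : L ∈ SelfRet x y) : L.headD d = x := by
  rw [List.headD_eq_head?_getD, hL.2.2.1, Option.getD_some]

lemma treeW_eq_of_mem_selfRet (hsym : Γ.IsSymm) {a b : TVert Γ r} {L : List (TVert Γ r)}
    (hL : L ∈ SelfRet a b) (hne : L ≠ [a]) :
    treeW Γ L = Γ (tlabel ((excursion a L).headD a)) (tlabel a) ^ 2 *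
      (treeW Γ (excursion a L) * treeW Γ (afterExcursion a L)) := by
  obtain ⟨x, hax, -, hp, hq⟩ := exists_excursion_mem_selfRet hL hne
  conv_lhs => rw [← cons_excursion_append hL.2.2.1]
  rw [treeW_cons_append hsym hax hp hq, headD_eq_of_mem_selfRet hp]

lemma length_excursion_le {a b : TVert Γ r} {L : List (TVert Γ r)} {m : ℕ}
    (hL : L ∈ SelfRet a b) (hne : L ≠ [a]) (hlen : L.length ≤ m + 1) :
    (excursion a L).length ≤ m ∧ (afterExcursion a L).length ≤ m := by
  obtain ⟨x, -, -, hp, hq⟩ := exists_excursion_mem_selfRet hL hne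
  have := congrArg List.length (cons_excursion_append hL.2.2.1)
  have := List.length_pos_iff.mpr hp.1
  have := List.length_pos_iff.mpr hq.1
  simp only [List.length_cons, List.length_append] at *
  omega

section FiniteBound

variable {v : Fin n → Fin n → ℝ} (hsym : Γ.IsSymm) (hv : ConvVec Γ v) {m : ℕ}
  (ih : ∀ a b : TVert Γ r, TAdj a b → ∀ F : Finset (List (TVert Γ r)),
    (∀ L ∈ F, L ∈ SelfRet a b ∧ L.length ≤ m) →
      ∑ L ∈ F, |treeW Γ L| ≤ Fop Γ v (tlabel a) (tlabel b))
include hsym hv ih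

lemma sum_excursions_le_ssum {a b : TVert Γ r} (hab : TAdj a b) {P : Finset (List (TVert Γ r))}
    (hP : ∀ p ∈ P, (∃ x, TAdj a x ∧ x ≠ b ∧ p ∈ SelfRet x a) ∧ p.length ≤ m) :
    ∑ p ∈ P, Γ (tlabel (p.headD a)) (tlabel a) ^ 2 * |treeW Γ p| ≤
      Ssum Γ v (tlabel a) (tlabel b) := by
  have hx : ∀ p ∈ P, ∃ x, TAdj a x ∧ x ≠ b ∧ p ∈ SelfRet x a ∧ p.headD a = x :=
    fun p hp => by
      obtain ⟨⟨x, hax, hxb, hpx⟩, -⟩ := hP p hp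
      exact ⟨x, hax, hxb, hpx, headD_eq_of_mem_selfRet hpx⟩
  have hmaps : ∀ p ∈ P, tlabel (p.headD a) ∈ nbrsExcept Γ (tlabel a) (tlabel b) := by
    intro p hp
    obtain ⟨x, hax, hxb, -, hpx⟩ := hx p hp
    exact hpx ▸ tlabel_mem_nbrsExcept hsym hab hax hxb
  rw [← Finset.sum_fiberwise_of_maps_to hmaps, ssum_eq_sum_nbrsExcept]
  refine Finset.sum_le_sum fun u hu => ?_
  obtain ⟨hxa, -, hxu⟩ := treeNbr_spec hsym hu
  have hfiber : ∀ p ∈ P.filter (fun p => tlabel (p.headD a) = u),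
      p ∈ SelfRet (treeNbr a b u) a ∧ p.length ≤ m := by
    intro p hp
    obtain ⟨hp, hpu⟩ := Finset.mem_filter.mp hp
    obtain ⟨x, hax, hxb, hpx, hhead⟩ := hx p hp
    rw [hhead] at hpu
    exact ⟨hpu ▸ eq_treeNbr hsym hab hax hxb ▸ hpx, (hP p hp).2⟩
  calc ∑ p ∈ P.filter (fun p => tlabel (p.headD a) = u),
        Γ (tlabel (p.headD a)) (tlabel a) ^ 2 * |treeW Γ p|
      = Γ u (tlabel a) ^ 2 * ∑ p ∈ P.filter (fun p => tlabel (p.headD a) = u), |treeW Γ p| := by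
        rw [Finset.mul_sum]
        exact Finset.sum_congr rfl fun p hp => by rw [(Finset.mem_filter.mp hp).2]
    _ ≤ Γ u (tlabel a) ^ 2 * Fop Γ v u (tlabel a) := by
        gcongr
        simpa [hxu] using ih _ _ hxa.symm _ hfiber
    _ ≤ Γ u (tlabel a) ^ 2 * v u (tlabel a) := by
        gcongr
        exact (hv.fop_lt hsym (hxu ▸ hxa.symm.adj_tlabel hsym)).le

lemma sum_abs_treeW_le_fop_succ {a b : TVert Γ r} (hab : TAdj a b) (F : Finset (List (TVert Γ r)))
    (hF : ∀ L ∈ F, L ∈ SelfRet a b ∧ L.length ≤ m + 1) :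
    ∑ L ∈ F, |treeW Γ L| ≤ Fop Γ v (tlabel a) (tlabel b) := by
  have hij := hab.adj_tlabel hsym
  set G := F.erase [a]
  have hG : ∀ L ∈ G, ((∃ x, TAdj a x ∧ x ≠ b ∧ excursion a L ∈ SelfRet x a) ∧
      (excursion a L).length ≤ m) ∧ afterExcursion a L ∈ SelfRet a b ∧
      (afterExcursion a L).length ≤ m := by
    intro L hL
    obtain ⟨hne, hLF⟩ := Finset.mem_erase.mp hL
    obtain ⟨x, hax, hxb, hp, hq⟩ := exists_excursion_mem_selfRet (hF L hLF).1 hne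
    have hlen := length_excursion_le (hF L hLF).1 hne (hF L hLF).2
    exact ⟨⟨⟨x, hax, hxb, hp⟩, hlen.1⟩, hq, hlen.2⟩
  have hsplit : ∑ L ∈ F, |treeW Γ L| ≤ 1 + ∑ L ∈ G, |treeW Γ L| := by
    by_cases ha : [a] ∈ F
    · rw [← Finset.add_sum_erase F _ ha, treeW_singleton, abs_one]
    · rw [show G = F from Finset.erase_eq_of_notMem ha]
      linarith
  have hprod : ∑ L ∈ G, |treeW Γ L| ≤
      (∑ p ∈ G.image (excursion a), Γ (tlabel (p.headD a)) (tlabel a) ^ 2 * |treeW Γ p|) *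
        ∑ q ∈ G.image (afterExcursion a), |treeW Γ q| := by
    refine le_of_eq_of_le (Finset.sum_congr rfl fun L hL => ?_)
      (sum_mul_le_sum_image_mul_sum_image (fun _ => by positivity) (fun _ => abs_nonneg _) ?_)
    · rw [treeW_eq_of_mem_selfRet hsym (hF L (Finset.mem_of_mem_erase hL)).1
        (Finset.ne_of_mem_erase hL), abs_mul, abs_mul, abs_sq, mul_assoc]
    · intro L hL L' hL' h
      rw [← cons_excursion_append (hF L (Finset.mem_of_mem_erase hL)).1.2.2.1,
        ← cons_excursion_append (hF L' (Finset.mem_of_mem_erase hL')).1.2.2.1]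
      simp_all
  have hP := sum_excursions_le_ssum hsym hv ih hab (P := G.image (excursion a)) <| by
    simpa only [Finset.mem_image, forall_exists_index, and_imp, forall_apply_eq_imp_iff₂]
      using fun L hL => (hG L hL).1
  have hQ := ih a b hab (G.image (afterExcursion a)) <| by
    simpa only [Finset.mem_image, forall_exists_index, and_imp, forall_apply_eq_imp_iff₂]
      using fun L hL => (hG L hL).2
  have hF1 := fop_mul_one_sub_ssum (hv.one_sub_ssum_pos hsym hij).ne'
  nlinarith [mul_le_mul hP hQ (Finset.sum_nonneg fun _ _ => abs_nonneg _)
    (hv.ssum_nonneg (tlabel a) (tlabel b))]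

end FiniteBound

lemma sum_abs_treeW_le_fop {v : Fin n → Fin n → ℝ} (hsym : Γ.IsSymm) (hv : ConvVec Γ v)
    (m : ℕ) {a b : TVert Γ r} (hab : TAdj a b) (F : Finset (List (TVert Γ r)))
    (hF : ∀ L ∈ F, L ∈ SelfRet a b ∧ L.length ≤ m) :
    ∑ L ∈ F, |treeW Γ L| ≤ Fop Γ v (tlabel a) (tlabel b) := by
  induction m generalizing a b F with
  | zero =>
    have hF0 : F = ∅ := Finset.eq_empty_of_forall_notMem fun L hL => by
      simpa [(hF L hL).1.1] using (hF L hL).2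
    simpa [hF0] using zero_le_one.trans (hv.one_le_fop hsym (hab.adj_tlabel hsym))
  | succ m ih => exact sum_abs_treeW_le_fop_succ hsym hv (fun a b hab F hF => ih hab F hF) hab F hF

/-- `ρ(SelfRet a b)` in the paper's notation. -/
def selfRetSum (a b : TVert Γ r) : ℝ := ∑' L : SelfRet a b, treeW Γ L.val

lemma tsum_eq_add_tsum_of_injective {α β : Type*} {f : α → ℝ} (hf : Summable f) {g : β → α}
    (hg : Function.Injective g) (a₀ : α) (hne : ∀ y, g y ≠ a₀)
    (hrange : ∀ x, x ≠ a₀ → x ∈ Set.range g) : ∑' x, f x = f a₀ + ∑' y, f (g y) := by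
  rw [hf.tsum_eq_add_tsum_ite a₀, ← hg.tsum_eq fun x hx => hrange x fun h => hx (if_pos h)]
  exact congrArg₂ _ rfl (tsum_congr fun y => if_neg (hne y))

section FirstReturn

variable (hsym : Γ.IsSymm) {a b : TVert Γ r} (hab : TAdj a b)

abbrev FirstReturnData (a b : TVert Γ r) : Type :=
  Σ u : nbrsExcept Γ (tlabel a) (tlabel b), SelfRet (treeNbr a b u) a × SelfRet a b

def joinAt (x : FirstReturnData a b) : SelfRet a b :=
  ⟨a :: (x.2.1.val ++ x.2.2.val), cons_append_mem_selfRet hab (treeNbr_spec hsym x.1.prop).1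
    (treeNbr_spec hsym x.1.prop).2.1 x.2.1.prop x.2.2.prop⟩

include hsym hab

lemma treeW_joinAt (x : FirstReturnData a b) :
    treeW Γ (joinAt hsym hab x).val =
      Γ x.1 (tlabel a) ^ 2 * (treeW Γ x.2.1.val * treeW Γ x.2.2.val) := by
  rw [joinAt, treeW_cons_append hsym (treeNbr_spec hsym x.1.prop).1 x.2.1.prop x.2.2.prop,
    (treeNbr_spec hsym x.1.prop).2.2]

lemma joinAt_ne_singleton (x : FirstReturnData a b) :
    joinAt hsym hab x ≠ ⟨[a], singleton_mem_selfRet a b⟩ := fun h => x.2.1.prop.1 <| by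
  have := congrArg Subtype.val h
  simp only [joinAt, List.cons.injEq, List.append_eq_nil_iff, true_and] at this
  exact this.1

lemma joinAt_injective : Function.Injective (joinAt hsym hab) := by
  rintro ⟨u, p, q⟩ ⟨u', p', q'⟩ h
  have hspec := treeNbr_spec hsym u.prop (a := a) (b := b)
  have hspec' := treeNbr_spec hsym u'.prop (a := a) (b := b)
  have hval : a :: (p.val ++ q.val) = a :: (p'.val ++ q'.val) := congrArg Subtype.val h
  have hpq := excursion_cons_append (notMem_of_mem_selfRet hspec.1.symm p.prop) q.prop.2.2.1
  have hpq' := excursion_cons_append (notMem_of_mem_selfRet hspec'.1.symm p'.prop)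
    q'.prop.2.2.1
  rw [hval] at hpq
  have hpp : p.val = p'.val := hpq.1.symm.trans hpq'.1
  have huu : u = u' := by
    have := p'.prop.2.2.1
    rw [← hpp, p.prop.2.2.1, Option.some.injEq] at this
    exact Subtype.ext (by rw [← hspec.2.2, ← hspec'.2.2, this])
  subst huu
  rw [Subtype.ext hpp, Subtype.ext (hpq.2.symm.trans hpq'.2)]

lemma mem_range_joinAt (L : SelfRet a b) (hL : L ≠ ⟨[a], singleton_mem_selfRet a b⟩) :
    L ∈ Set.range (joinAt hsym hab) := by
  obtain ⟨x, hax, hxb, hp, hq⟩ :=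
    exists_excursion_mem_selfRet L.prop fun h => hL (Subtype.ext h)
  exact ⟨⟨⟨_, tlabel_mem_nbrsExcept hsym hab hax hxb⟩,
    ⟨_, eq_treeNbr hsym hab hax hxb ▸ hp⟩, ⟨_, hq⟩⟩,
    Subtype.ext (cons_excursion_append L.prop.2.2.1)⟩

end FirstReturn

section Summable

variable {v : Fin n → Fin n → ℝ} (hsym : Γ.IsSymm) (hv : ConvVec Γ v) {a b : TVert Γ r}
  (hab : TAdj a b)
include hsym hv hab

lemma sum_abs_treeW_subtype_le_fop (s : Finset (SelfRet a b)) :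
    ∑ L ∈ s, |treeW Γ L.val| ≤ Fop Γ v (tlabel a) (tlabel b) := by
  refine le_of_eq_of_le
    (Finset.sum_map s (Function.Embedding.subtype _) fun L => |treeW Γ L|).symm ?_
  refine sum_abs_treeW_le_fop hsym hv ((s.map (Function.Embedding.subtype _)).sup List.length)
    hab _ fun L hL => ⟨?_, Finset.le_sup hL⟩
  obtain ⟨L, -, rfl⟩ := Finset.mem_map.mp hL
  exact L.prop

lemma summable_abs_treeW : Summable fun L : SelfRet a b => |treeW Γ L.val| :=
  summable_of_sum_le (fun _ => abs_nonneg _) (sum_abs_treeW_subtype_le_fop hsym hv hab)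

lemma summable_norm_treeW : Summable fun L : SelfRet a b => ‖treeW Γ L.val‖ := by
  simpa only [Real.norm_eq_abs] using summable_abs_treeW hsym hv hab

lemma abs_selfRetSum_le_fop : |selfRetSum a b| ≤ Fop Γ v (tlabel a) (tlabel b) := by
  have h := norm_tsum_le_tsum_norm (summable_norm_treeW hsym hv hab)
  simp only [Real.norm_eq_abs] at h
  exact h.trans ((summable_abs_treeW hsym hv hab).tsum_le_of_sum_le
    (sum_abs_treeW_subtype_le_fop hsym hv hab))

lemma selfRetSum_eq :
    selfRetSum a b = 1 + (∑ u ∈ nbrsExcept Γ (tlabel a) (tlabel b),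
      Γ u (tlabel a) ^ 2 * selfRetSum (treeNbr a b u) a) * selfRetSum a b := by
  have hf : Summable fun L : SelfRet a b => treeW Γ L.val := (summable_abs_treeW hsym hv hab).of_abs
  have hsum (u : nbrsExcept Γ (tlabel a) (tlabel b)) :
      Summable fun pq : SelfRet (treeNbr a b u) a × SelfRet a b =>
        treeW Γ pq.1.val * treeW Γ pq.2.val :=
    summable_mul_of_summable_norm (f := fun L : SelfRet (treeNbr a b u) a => treeW Γ L.val)
      (g := fun L : SelfRet a b => treeW Γ L.val)
      (summable_norm_treeW hsym hv (treeNbr_spec hsym u.prop).1.symm)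
      (summable_norm_treeW hsym hv hab)
  have hsumX : Summable fun x : FirstReturnData a b =>
      Γ x.1 (tlabel a) ^ 2 * (treeW Γ x.2.1.val * treeW Γ x.2.2.val) :=
    (hf.comp_injective (joinAt_injective hsym hab)).congr (treeW_joinAt hsym hab)
  have hsigma : ∑' x, treeW Γ (joinAt hsym hab x).val =
      ∑ u ∈ nbrsExcept Γ (tlabel a) (tlabel b),
        Γ u (tlabel a) ^ 2 * (selfRetSum (treeNbr a b u) a * selfRetSum a b) := by
    rw [tsum_congr (treeW_joinAt hsym hab),
      hsumX.tsum_sigma' fun u => (hsum u).mul_left (Γ u (tlabel a) ^ 2), tsum_fintype]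
    refine Eq.trans (Finset.sum_congr rfl fun u _ => ?_) (Finset.sum_coe_sort _
      fun u => Γ u (tlabel a) ^ 2 * (selfRetSum (treeNbr a b u) a * selfRetSum a b))
    dsimp only
    rw [tsum_mul_left, selfRetSum, selfRetSum, tsum_mul_tsum_of_summable_norm
      (f := fun L : SelfRet (treeNbr a b u) a => treeW Γ L.val)
      (g := fun L : SelfRet a b => treeW Γ L.val)
      (summable_norm_treeW hsym hv (treeNbr_spec hsym u.prop).1.symm)
      (summable_norm_treeW hsym hv hab)]
  conv_lhs => rw [selfRetSum, tsum_eq_add_tsum_of_injective hf (joinAt_injective hsym hab)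
    ⟨[a], singleton_mem_selfRet a b⟩ (joinAt_ne_singleton hsym hab)
    (mem_range_joinAt hsym hab), treeW_singleton, hsigma]
  simp only [Finset.sum_mul, mul_assoc]

end Summable

lemma abs_sub_le_of_mul_one_sub_eq_one {ρ γ F Sρ Sγ Sv ε : ℝ} (hρ : ρ * (1 - Sρ) = 1)
    (hγ : γ * (1 - Sγ) = 1) (hF : F * (1 - Sv) = 1) (hρF : |ρ| ≤ F) (hγ0 : 0 < γ)
    (hS : |Sρ - Sγ| ≤ ε * (Sv - Sγ)) : |ρ - γ| ≤ ε * (F - γ) := by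
  have hρ' : ρ - γ = ρ * γ * (Sρ - Sγ) := by linear_combination γ * hρ - ρ * hγ
  have hF' : F - γ = F * γ * (Sv - Sγ) := by linear_combination γ * hF - F * hγ
  have hFγ : 0 ≤ F * γ := mul_nonneg ((abs_nonneg ρ).trans hρF) hγ0.le
  rw [hρ', abs_mul, abs_mul, abs_of_pos hγ0, hF']
  calc |ρ| * γ * |Sρ - Sγ| ≤ F * γ * (ε * (Sv - Sγ)) :=
        mul_le_mul (mul_le_mul_of_nonneg_right hρF hγ0.le) hS (abs_nonneg _) hFγ
    _ = ε * (F * γ * (Sv - Sγ)) := by ring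

lemma exists_le_mul_of_finite {ι : Type*} [Finite ι] (s : Set ι) (x y : ι → ℝ)
    (hy : ∀ i ∈ s, 0 < y i) :
    ∃ c, 0 ≤ c ∧ (∀ i ∈ s, x i ≤ c * y i) ∧ ((∀ i ∈ s, x i < y i) → c < 1) := by
  rcases s.eq_empty_or_nonempty with rfl | hne
  · exact ⟨0, le_rfl, by simp, fun _ => zero_lt_one⟩
  obtain ⟨k, hk, hmax⟩ := s.exists_max_image (fun i => x i / y i) s.toFinite hne
  refine ⟨max (x k / y k) 0, le_max_right _ _, fun i hi => ?_, fun hlt => ?_⟩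
  · calc x i = x i / y i * y i := (div_mul_cancel₀ _ (hy i hi).ne').symm
      _ ≤ max (x k / y k) 0 * y i :=
        mul_le_mul_of_nonneg_right ((hmax i hi).trans (le_max_left _ _)) (hy i hi).le
  · exact max_lt ((div_lt_one (hy k hk)).mpr (hlt k hk)) zero_lt_one

lemma mul_one_sub_ssum_eq_one {γ : Fin n → Fin n → ℝ} {i j : Fin n}
    (hfix : γ i j = 1 / (1 - Ssum Γ γ i j)) (hpos : 0 < γ i j) :
    γ i j * (1 - Ssum Γ γ i j) = 1 := by
  have hne : 1 - Ssum Γ γ i j ≠ 0 := fun h => by simp [h] at hfix; linarith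
  rw [hfix]
  exact one_div_mul_cancel hne

section Contraction

variable {v γ : Fin n → Fin n → ℝ} (hsym : Γ.IsSymm) (hv : ConvVec Γ v)
  (hfix : ∀ i j, Adj Γ i j → γ i j = 1 / (1 - Ssum Γ γ i j))
  (hγ : ∀ i j, Adj Γ i j → 0 < γ i j ∧ γ i j < v i j) {θ c : ℝ} (hθ0 : 0 ≤ θ)
  (hθ : ∀ i j, Adj Γ i j → Fop Γ v i j - γ i j ≤ θ * (v i j - γ i j)) (hc0 : 0 ≤ c)
  (hc : ∀ i j, Adj Γ i j → Fop Γ v i j + v i j ≤ c * (v i j - γ i j))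
include hsym hv hfix hγ hθ0 hθ hc0 hc

lemma abs_selfRetSum_sub_le (m : ℕ) {a b : TVert Γ r} (hab : TAdj a b) :
    |selfRetSum a b - γ (tlabel a) (tlabel b)| ≤
      c * θ ^ m * (v (tlabel a) (tlabel b) - γ (tlabel a) (tlabel b)) := by
  induction m generalizing a b with
  | zero =>
    have hij := hab.adj_tlabel hsym
    calc |selfRetSum a b - γ (tlabel a) (tlabel b)|
        ≤ |selfRetSum a b| + |γ (tlabel a) (tlabel b)| := abs_sub _ _
      _ ≤ Fop Γ v (tlabel a) (tlabel b) + v (tlabel a) (tlabel b) := by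
        rw [abs_of_pos (hγ _ _ hij).1]
        linarith [abs_selfRetSum_le_fop hsym hv hab, (hγ _ _ hij).2]
      _ ≤ _ := by simpa using hc _ _ hij
  | succ m ih =>
    have hij := hab.adj_tlabel hsym
    set i := tlabel a
    set j := tlabel b
    have hS : |(∑ u ∈ nbrsExcept Γ i j, Γ u i ^ 2 * selfRetSum (treeNbr a b u) a) -
        Ssum Γ γ i j| ≤ c * θ ^ m * (Ssum Γ v i j - Ssum Γ γ i j) := by
      rw [ssum_eq_sum_nbrsExcept, ssum_eq_sum_nbrsExcept, ← Finset.sum_sub_distrib,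
        ← Finset.sum_sub_distrib, Finset.mul_sum]
      refine (Finset.abs_sum_le_sum_abs _ _).trans (Finset.sum_le_sum fun u hu => ?_)
      obtain ⟨hua, -, hlab⟩ := treeNbr_spec hsym hu
      have := ih hua.symm
      rw [hlab] at this
      rw [← mul_sub, abs_mul, abs_of_nonneg (sq_nonneg _)]
      calc Γ u i ^ 2 * |selfRetSum (treeNbr a b u) a - γ u i|
          ≤ Γ u i ^ 2 * (c * θ ^ m * (v u i - γ u i)) := by gcongr
        _ = _ := by ring
    have hρ : selfRetSum a b * (1 - ∑ u ∈ nbrsExcept Γ i j,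
        Γ u i ^ 2 * selfRetSum (treeNbr a b u) a) = 1 := by
      linear_combination selfRetSum_eq hsym hv hab
    have := abs_sub_le_of_mul_one_sub_eq_one hρ
      (mul_one_sub_ssum_eq_one (hfix i j hij) (hγ i j hij).1)
      (fop_mul_one_sub_ssum (hv.one_sub_ssum_pos hsym hij).ne')
      (abs_selfRetSum_le_fop hsym hv hab) (hγ i j hij).1 hS
    calc _ ≤ c * θ ^ m * (Fop Γ v i j - γ i j) := this
      _ ≤ c * θ ^ m * (θ * (v i j - γ i j)) := by gcongr; exact hθ i j hij
      _ = _ := by ring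

end Contraction

theorem stmt14_general {n : ℕ} (Γ : Matrix (Fin n) (Fin n) ℝ) (hsym : Γ.IsSymm)
    (hcd : ∃ v, ConvVec Γ v)
    (γs : Fin n → Fin n → ℝ)
    (hfix : ∀ i j, Adj Γ i j → γs i j = 1 / (1 - Ssum Γ γs i j))
    (hbnd : ∀ v, ConvVec Γ v → ∀ i j, Adj Γ i j → 0 < γs i j ∧ γs i j < v i j)
    (r : Fin n) (iv jv : TVert Γ r) (hadj : TAdj iv jv) :
    Summable (fun L : SelfRet iv jv => |treeW Γ L.val|) ∧
    (∑' L : SelfRet iv jv, treeW Γ L.val) = γs (tlabel iv) (tlabel jv) := by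
  obtain ⟨v, hv⟩ := hcd
  have hγ := hbnd v hv
  have hgap : ∀ e ∈ {e : Fin n × Fin n | Adj Γ e.1 e.2}, 0 < v e.1 e.2 - γs e.1 e.2 :=
    fun e he => sub_pos.mpr (hγ _ _ he).2
  obtain ⟨θ, hθ0, hθ, hθlt⟩ :=
    exists_le_mul_of_finite _ (fun e => Fop Γ v e.1 e.2 - γs e.1 e.2) _ hgap
  obtain ⟨c, hc0, hc, -⟩ := exists_le_mul_of_finite _ (fun e => Fop Γ v e.1 e.2 + v e.1 e.2) _ hgap
  have hθ1 : θ < 1 := hθlt fun e he => by linarith [hv.fop_lt hsym he]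
  have hdecay (m : ℕ) := abs_selfRetSum_sub_le hsym hv hfix hγ hθ0 (fun i j h => hθ (i, j) h) hc0
    (fun i j h => hc (i, j) h) m hadj
  refine ⟨summable_abs_treeW hsym hv hadj, ?_⟩
  have hlim := ((tendsto_pow_atTop_nhds_zero_of_lt_one hθ0 hθ1).const_mul c).mul_const
    (v (tlabel iv) (tlabel jv) - γs (tlabel iv) (tlabel jv))
  rw [mul_zero, zero_mul] at hlim
  exact sub_eq_zero.mp (abs_nonpos_iff.mp (ge_of_tendsto' hlim hdecay))

/-- Lemma on the computation tree: if `f` is convex decomposable, the total weight of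
the self-returning walks from `ĩ` (label `i`) that never cross the edge `(ĩ, j̃)`
(label `j`) is absolutely convergent and equals `γ*_{ij}`. -/
theorem stmt14 {n : ℕ} (Γ : Matrix (Fin n) (Fin n) ℝ) (hsym : Γ.IsSymm)
    (hdiag : ∀ i, Γ i i = 1) (hpd : Γ.PosDef)
    (hcd : ∃ v, ConvVec Γ v)
    (γs : Fin n → Fin n → ℝ)
    (hfix : ∀ i j, Adj Γ i j → γs i j = 1 / (1 - Ssum Γ γs i j))
    (hbnd : ∀ v, ConvVec Γ v → ∀ i j, Adj Γ i j → 0 < γs i j ∧ γs i j < v i j)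
    (r : Fin n) (iv jv : TVert Γ r) (hadj : TAdj iv jv) :
    Summable (fun L : SelfRet iv jv => |treeW Γ L.val|) ∧
    (∑' L : SelfRet iv jv, treeW Γ L.val) = γs (tlabel iv) (tlabel jv) :=
  stmt14_general Γ hsym hcd γs hfix hbnd r iv jv hadj
end
end

section
/- Let A, A⁽ᵗ⁾ be square matrices and D, D⁽ᵗ⁾, y fixed, with A⁽ᵗ⁾ → A, D⁽ᵗ⁾ → D, and the spectral radius of A less than 1. Then the time-varying affine iteration z⁽ᵗ⁺¹⁾ = −D⁽ᵗ⁾y + A⁽ᵗ⁾z⁽ᵗ⁾ converges, for any initial z⁽⁰⁾, to z^∞ = −(I − A)⁻¹Dy. -/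
/-!
Write `bₜ = -D⁽ᵗ⁾ y → b = -D y` and `z^∞ = (1 - A)⁻¹ b`, a fixed point of `z ↦ b + A z`.
The error `eₜ = z t - z^∞` satisfies `eₜ₊₁ = A⁽ᵗ⁾ eₜ + wₜ` with
`wₜ = (A⁽ᵗ⁾ - A) z^∞ + (bₜ - b) → 0`. By Gelfand's formula, `‖Aᵐ‖ ≤ αᵐ` for some `α < 1` and
all large `m`, so `N x = ∑_{j<m} α⁻ʲ ‖Aʲ x‖` is an equivalent norm with `N (A x) ≤ α N x`.
Once `A⁽ᵗ⁾` is close to `A` this gives `N eₜ₊₁ ≤ β N eₜ + K ‖wₜ‖` with `β < 1`,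
which forces `N eₜ → 0`.
-/

open Matrix Filter Topology

theorem tendsto_zero_of_le_mul_add {a c : ℕ → ℝ} {β : ℝ} (hβ0 : 0 ≤ β) (hβ1 : β < 1)
    (ha : ∀ t, 0 ≤ a t) (hc : Tendsto c atTop (𝓝 0))
    (h : ∀ᶠ t in atTop, a (t + 1) ≤ β * a t + c t) :
    Tendsto a atTop (𝓝 0) := by
  refine tendsto_order.2 ⟨fun b hb => .of_forall fun t => hb.trans_le (ha t), fun ε hε => ?_⟩
  have hδ : 0 < (1 - β) * (ε / 2) := by nlinarith
  obtain ⟨T, hT⟩ := (h.and (hc.eventually (eventually_le_nhds hδ))).exists_forall_of_atTop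
  -- once `c ≤ (1 - β) ε / 2`, the excess `a - ε / 2` contracts by the factor `β`
  have hdecay : ∀ s, a (s + T) ≤ ε / 2 + β ^ s * a T := by
    intro s
    induction s with
    | zero => simp only [zero_add, pow_zero, one_mul]; linarith
    | succ s ih =>
      obtain ⟨hrec, hsmall⟩ := hT (s + T) (Nat.le_add_left T s)
      rw [Nat.add_right_comm, pow_succ]
      nlinarith
  have hlim : Tendsto (fun s => ε / 2 + β ^ s * a T) atTop (𝓝 (ε / 2)) := by
    simpa using
      ((tendsto_pow_atTop_nhds_zero_of_lt_one hβ0 hβ1).mul_const (a T)).const_add (ε / 2)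
  rw [← map_add_atTop_eq_nat T, eventually_map]
  filter_upwards [hlim.eventually (gt_mem_nhds (half_lt_self hε))] with s hs
  exact (hdecay s).trans_lt hs

theorem exists_norm_pow_le_pow_of_spectralRadius_lt_one {R : Type*} [NormedRing R]
    [NormedAlgebra ℂ R] [CompleteSpace R] {a : R} (h : spectralRadius ℂ a < 1) :
    ∃ α : ℝ, 0 < α ∧ α < 1 ∧ ∀ᶠ k in atTop, ‖a ^ k‖ ≤ α ^ k := by
  obtain ⟨c, hρc, hc1⟩ := exists_between h
  have hc : c ≠ ⊤ := hc1.ne_top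
  have hα0 : 0 < c.toReal := ENNReal.toReal_pos (pos_of_gt hρc).ne' hc
  refine ⟨c.toReal, hα0, ENNReal.toReal_lt_of_lt_ofReal (by simpa using hc1), ?_⟩
  have hroot := (spectrum.pow_norm_pow_one_div_tendsto_nhds_spectralRadius a).eventually
    (gt_mem_nhds (ENNReal.ofReal_toReal hc ▸ hρc))
  filter_upwards [hroot, eventually_ne_atTop 0] with k hk hk0
  rw [ENNReal.ofReal_lt_ofReal_iff hα0, one_div] at hk
  calc ‖a ^ k‖ = (‖a ^ k‖ ^ (k⁻¹ : ℝ)) ^ k :=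
        (Real.rpow_inv_natCast_pow (norm_nonneg _) hk0).symm
    _ ≤ c.toReal ^ k := pow_le_pow_left₀ (by positivity) hk.le k

namespace Matrix

open scoped Matrix.Norms.Operator

theorem linfty_opNorm_map_ofReal {m n : Type*} [Fintype m] [Fintype n] (A : Matrix m n ℝ) :
    ‖A.map Complex.ofReal‖ = ‖A‖ := by
  simp [Matrix.linfty_opNorm_def, Complex.nnnorm_real]

variable {𝕜 ι : Type*} [Fintype ι] [DecidableEq ι]

theorem isUnit_one_sub_of_norm_pow_lt_one [NormedField 𝕜] {A : Matrix ι ι 𝕜} {m : ℕ}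
    (h : ‖A ^ m‖ < 1) : IsUnit (1 - A) := by
  refine mulVec_injective_iff_isUnit.1 <|
    (injective_iff_map_eq_zero (1 - A).mulVecLin).2 fun v hv => ?_
  have hAv : A *ᵥ v = v := by
    rw [mulVecLin_apply, sub_mulVec, one_mulVec, sub_eq_zero] at hv
    exact hv.symm
  have hpow : ∀ k, A ^ k *ᵥ v = v := by
    intro k
    induction k with
    | zero => exact one_mulVec v
    | succ k ih => rw [pow_succ, ← mulVec_mulVec, hAv, ih]
  have hle : ‖v‖ ≤ ‖A ^ m‖ * ‖v‖ :=
    calc ‖v‖ = ‖A ^ m *ᵥ v‖ := by rw [hpow]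
      _ ≤ ‖A ^ m‖ * ‖v‖ := linfty_opNorm_mulVec _ _
  exact norm_le_zero_iff.1 (by nlinarith [norm_nonneg v])

section AdaptedNorm

open Finset

variable [NormedRing 𝕜]

noncomputable def adaptedNorm (A : Matrix ι ι 𝕜) (α : ℝ) (m : ℕ) (x : ι → 𝕜) : ℝ :=
  ∑ j ∈ range m, α⁻¹ ^ j * ‖A ^ j *ᵥ x‖

variable {A : Matrix ι ι 𝕜} {α : ℝ} {m : ℕ}

theorem norm_le_adaptedNorm (hα : 0 ≤ α) (hm : 0 < m) (x : ι → 𝕜) :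
    ‖x‖ ≤ A.adaptedNorm α m x :=
  calc ‖x‖ = α⁻¹ ^ 0 * ‖A ^ 0 *ᵥ x‖ := by simp
    _ ≤ A.adaptedNorm α m x :=
      single_le_sum (f := fun j => α⁻¹ ^ j * ‖A ^ j *ᵥ x‖) (fun j _ => by positivity)
        (mem_range.2 hm)

theorem adaptedNorm_le (hα : 0 ≤ α) (x : ι → 𝕜) :
    A.adaptedNorm α m x ≤ (∑ j ∈ range m, α⁻¹ ^ j * ‖A ^ j‖) * ‖x‖ := by
  rw [adaptedNorm, sum_mul]
  refine sum_le_sum fun j _ => ?_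
  rw [mul_assoc]
  exact mul_le_mul_of_nonneg_left (linfty_opNorm_mulVec _ _) (by positivity)

theorem adaptedNorm_add_le (hα : 0 ≤ α) (x y : ι → 𝕜) :
    A.adaptedNorm α m (x + y) ≤ A.adaptedNorm α m x + A.adaptedNorm α m y := by
  rw [adaptedNorm, adaptedNorm, adaptedNorm, ← sum_add_distrib]
  refine sum_le_sum fun j _ => ?_
  rw [← mul_add, mulVec_add]
  exact mul_le_mul_of_nonneg_left (norm_add_le _ _) (by positivity)

/-- Shifting `j ↦ j + 1` trades the term `‖x‖` for `α⁻ᵐ ‖Aᵐ x‖ ≤ ‖x‖`. -/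
theorem adaptedNorm_mulVec_le (hα : 0 < α) (hAm : ‖A ^ m‖ ≤ α ^ m) (x : ι → 𝕜) :
    A.adaptedNorm α m (A *ᵥ x) ≤ α * A.adaptedNorm α m x := by
  have htop : α⁻¹ ^ m * ‖A ^ m *ᵥ x‖ ≤ α⁻¹ ^ 0 * ‖A ^ 0 *ᵥ x‖ :=
    calc α⁻¹ ^ m * ‖A ^ m *ᵥ x‖ ≤ α⁻¹ ^ m * (α ^ m * ‖x‖) := by
          gcongr
          exact (linfty_opNorm_mulVec _ _).trans (by gcongr)
      _ = α⁻¹ ^ 0 * ‖A ^ 0 *ᵥ x‖ := by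
          rw [← mul_assoc, ← mul_pow, inv_mul_cancel₀ hα.ne']
          simp
  have hshift := sum_range_succ' (fun j => α⁻¹ ^ j * ‖A ^ j *ᵥ x‖) m
  rw [sum_range_succ] at hshift
  calc A.adaptedNorm α m (A *ᵥ x)
      = α * ∑ j ∈ range m, α⁻¹ ^ (j + 1) * ‖A ^ (j + 1) *ᵥ x‖ := by
        rw [adaptedNorm, mul_sum]
        refine sum_congr rfl fun j _ => ?_
        rw [mulVec_mulVec, ← pow_succ, pow_succ' α⁻¹]
        field_simp
    _ ≤ α * A.adaptedNorm α m x :=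
        mul_le_mul_of_nonneg_left (by rw [adaptedNorm]; linarith) hα.le

end AdaptedNorm

theorem tendsto_zero_of_perturbed_linear_recursion [NormedRing 𝕜]
    {A : Matrix ι ι 𝕜} {At : ℕ → Matrix ι ι 𝕜} (hAt : Tendsto At atTop (𝓝 A))
    {α : ℝ} (hα0 : 0 < α) (hα1 : α < 1) (hA : ∀ᶠ k in atTop, ‖A ^ k‖ ≤ α ^ k)
    {e w : ℕ → ι → 𝕜} (hw : Tendsto w atTop (𝓝 0))
    (he : ∀ t, e (t + 1) = At t *ᵥ e t + w t) :
    Tendsto e atTop (𝓝 0) := by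
  obtain ⟨m, hAm, hm⟩ := (hA.and (eventually_gt_atTop 0)).exists
  set N := A.adaptedNorm α m
  set K := ∑ j ∈ Finset.range m, α⁻¹ ^ j * ‖A ^ j‖
  have hK : 0 ≤ K := Finset.sum_nonneg fun j _ => by positivity
  have hNle : ∀ x, ‖x‖ ≤ N x := norm_le_adaptedNorm hα0.le hm
  have hstep : ∀ t, N (e (t + 1)) ≤ (α + K * ‖At t - A‖) * N (e t) + K * ‖w t‖ := by
    intro t
    have hsplit : e (t + 1) = A *ᵥ e t + ((At t - A) *ᵥ e t + w t) := by
      rw [he, sub_mulVec]; abel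
    have hpert : ‖(At t - A) *ᵥ e t + w t‖ ≤ ‖At t - A‖ * N (e t) + ‖w t‖ :=
      calc _ ≤ ‖(At t - A) *ᵥ e t‖ + ‖w t‖ := norm_add_le _ _
        _ ≤ ‖At t - A‖ * ‖e t‖ + ‖w t‖ := by gcongr; exact linfty_opNorm_mulVec _ _
        _ ≤ ‖At t - A‖ * N (e t) + ‖w t‖ := by gcongr; exact hNle _
    calc N (e (t + 1)) ≤ N (A *ᵥ e t) + N ((At t - A) *ᵥ e t + w t) := by
          rw [hsplit]; exact adaptedNorm_add_le hα0.le _ _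
      _ ≤ α * N (e t) + K * (‖At t - A‖ * N (e t) + ‖w t‖) :=
          add_le_add (adaptedNorm_mulVec_le hα0 hAm _)
            ((adaptedNorm_le hα0.le _).trans (mul_le_mul_of_nonneg_left hpert hK))
      _ = (α + K * ‖At t - A‖) * N (e t) + K * ‖w t‖ := by ring
  have hsmall : ∀ᶠ t in atTop, K * ‖At t - A‖ ≤ (1 - α) / 2 := by
    have : Tendsto (fun t => K * ‖At t - A‖) atTop (𝓝 0) := by
      simpa using (tendsto_iff_norm_sub_tendsto_zero.1 hAt).const_mul K
    exact this.eventually (eventually_le_nhds (by linarith))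
  have hN : Tendsto (fun t => N (e t)) atTop (𝓝 0) := by
    refine tendsto_zero_of_le_mul_add (β := (1 + α) / 2) (by linarith) (by linarith)
      (fun t => (norm_nonneg _).trans (hNle _))
      (by simpa using hw.norm.const_mul K) ?_
    filter_upwards [hsmall] with t ht
    have := mul_le_mul_of_nonneg_right ht ((norm_nonneg _).trans (hNle (e t)))
    linarith [hstep t]
  exact squeeze_zero_norm (fun t => hNle _) hN

theorem tendsto_of_affine_recursion [NormedField 𝕜]
    {A : Matrix ι ι 𝕜} {At : ℕ → Matrix ι ι 𝕜} (hAt : Tendsto At atTop (𝓝 A))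
    {b : ι → 𝕜} {bt : ℕ → ι → 𝕜} (hbt : Tendsto bt atTop (𝓝 b))
    {α : ℝ} (hα0 : 0 < α) (hα1 : α < 1) (hA : ∀ᶠ k in atTop, ‖A ^ k‖ ≤ α ^ k)
    {z : ℕ → ι → 𝕜} (hz : ∀ t, z (t + 1) = bt t + At t *ᵥ z t) :
    Tendsto z atTop (𝓝 ((1 - A)⁻¹ *ᵥ b)) := by
  obtain ⟨m, hAm, hm⟩ := (hA.and (eventually_ne_atTop 0)).exists
  have hunit : IsUnit (1 - A).det := (isUnit_iff_isUnit_det _).1 <|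
    isUnit_one_sub_of_norm_pow_lt_one (hAm.trans_lt (pow_lt_one₀ hα0.le hα1 hm))
  set zinf := (1 - A)⁻¹ *ᵥ b
  have hfix : zinf = b + A *ᵥ zinf := by
    have : (1 - A) *ᵥ zinf = b := by
      rw [mulVec_mulVec, mul_nonsing_inv _ hunit, one_mulVec]
    rw [sub_mulVec, one_mulVec] at this
    rw [← this]; abel
  have herr : ∀ t,
      z (t + 1) - zinf = At t *ᵥ (z t - zinf) + ((At t - A) *ᵥ zinf + (bt t - b)) := by
    intro t
    rw [hz, mulVec_sub, sub_mulVec]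
    nth_rewrite 1 [hfix]
    abel
  have hw : Tendsto (fun t => (At t - A) *ᵥ zinf + (bt t - b)) atTop (𝓝 0) := by
    have hmul : Tendsto (fun t => (At t - A) *ᵥ zinf) atTop (𝓝 ((A - A) *ᵥ zinf)) :=
      ((continuous_id.matrix_mulVec continuous_const).tendsto _).comp (hAt.sub_const A)
    simpa using hmul.add (hbt.sub_const b)
  exact tendsto_sub_nhds_zero_iff.1 <|
    tendsto_zero_of_perturbed_linear_recursion hAt hα0 hα1 hA hw herr

theorem tendsto_of_affine_recursion_of_spectralRadius_lt_one
    {A : Matrix ι ι ℝ} {At : ℕ → Matrix ι ι ℝ} (hAt : Tendsto At atTop (𝓝 A))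
    {b : ι → ℝ} {bt : ℕ → ι → ℝ} (hbt : Tendsto bt atTop (𝓝 b))
    (hρ : spectralRadius ℂ (A.map Complex.ofReal) < 1)
    {z : ℕ → ι → ℝ} (hz : ∀ t, z (t + 1) = bt t + At t *ᵥ z t) :
    Tendsto z atTop (𝓝 ((1 - A)⁻¹ *ᵥ b)) := by
  obtain ⟨α, hα0, hα1, hpow⟩ := exists_norm_pow_le_pow_of_spectralRadius_lt_one hρ
  refine tendsto_of_affine_recursion hAt hbt hα0 hα1 ?_ hz
  filter_upwards [hpow] with k hk
  have hmap : (A ^ k).map Complex.ofReal = A.map Complex.ofReal ^ k :=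
    A.map_pow Complex.ofRealHom k
  rwa [← hmap, linfty_opNorm_map_ofReal] at hk

end Matrix

/-- Time-varying affine iteration `z⁽ᵗ⁺¹⁾ = −D⁽ᵗ⁾y + A⁽ᵗ⁾z⁽ᵗ⁾` with `A⁽ᵗ⁾ → A`,
`D⁽ᵗ⁾ → D`, and spectral radius of `A` less than 1 converges, for any initial
condition, to `z^∞ = −(I − A)⁻¹ D y`. -/
theorem stmt17 {n : ℕ}
    (A : Matrix (Fin n) (Fin n) ℝ) (At : ℕ → Matrix (Fin n) (Fin n) ℝ)
    (D : Matrix (Fin n) (Fin n) ℝ) (Dt : ℕ → Matrix (Fin n) (Fin n) ℝ)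
    (y : Fin n → ℝ)
    (hA : ∀ i j, Tendsto (fun t => At t i j) atTop (nhds (A i j)))
    (hD : ∀ i j, Tendsto (fun t => Dt t i j) atTop (nhds (D i j)))
    (hρ : spectralRadius ℂ (A.map (Complex.ofReal)) < 1)
    (z : ℕ → Fin n → ℝ)
    (hrec : ∀ t, z (t + 1) = -(Dt t).mulVec y + (At t).mulVec (z t)) :
    Tendsto z atTop (nhds (-((1 - A)⁻¹.mulVec (D.mulVec y)))) := by
  have hAt : Tendsto At atTop (𝓝 A) := tendsto_pi_nhds.2 fun i => tendsto_pi_nhds.2 (hA i)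
  have hDt : Tendsto Dt atTop (𝓝 D) := tendsto_pi_nhds.2 fun i => tendsto_pi_nhds.2 (hD i)
  have hbt : Tendsto (fun t => -(Dt t *ᵥ y)) atTop (𝓝 (-(D *ᵥ y))) :=
    (((continuous_id.matrix_mulVec continuous_const).tendsto D).comp hDt).neg
  simpa only [mulVec_neg] using
    Matrix.tendsto_of_affine_recursion_of_spectralRadius_lt_one hAt hbt hρ hrec
end
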